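/- arXiv:2507.17646 — 2 statements merged into one kernel-verified Lean document; each statement's English description precedes it below -/
import Mathlib

section
/- Let G be a finite connected simple graph with a cut-vertex x such that G − x has exactly two connected components C₁ and C₂, let v₁ be a universal vertex of C₁, suppose the number of universal vertices of C₁ is at most the number of universal vertices of C₂, and suppose v₁x is an edge of G that is not a bridge of G. Then G is not 2-γ'MB-critical. -/
/-!
If `G` were critical, Staller opening at `x` would force Dominator into dominating pairs with
one vertex in each component, each universal in its component; so some component, and then by
`u(C₁) ≤ u(C₂)` the component `C₂`, has two universal vertices. Since `v₁x` is not a bridge,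
`x` has a second neighbour `y ∈ C₁`. If two vertices of `C₁ ∪ {x}` are universal there
(`v₁` and `y`, or `x` and `v₁`), Dominator still wins on `G` minus an edge from `x` into `C₂`
by pairing such a vertex with a universal vertex of `C₂`. Otherwise no single vertex dominates
`G`, and deleting `xv₁` (when `x` sees all of `C₂`) or `xy` (otherwise) destroys no dominating
pair of `G`, so Dominator's strategy on `G` survives the deletion.
-/

/-- `D` is a dominating set of `G`: every vertex not in `D` has a neighbor in `D`. -/
def Dominating {V : Type*} (G : SimpleGraph V) (D : Set V) : Prop :=
  ∀ v, v ∉ D → ∃ d ∈ D, G.Adj d v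

/-- Dominator wins the S-game on `G` within one move. -/
def WinsWithin1 {V : Type*} (G : SimpleGraph V) : Prop :=
  ∀ s₁ : V, ∃ d₁, d₁ ≠ s₁ ∧ Dominating G {d₁}

/-- Dominator wins the S-game on `G` within two moves. -/
def WinsWithin2 {V : Type*} (G : SimpleGraph V) : Prop :=
  ∀ s₁ : V, ∃ d₁, d₁ ≠ s₁ ∧
    (Dominating G {d₁} ∨
      ∀ s₂, s₂ ∉ ({s₁, d₁} : Set V) →
        ∃ d₂, d₂ ∉ ({s₁, d₁, s₂} : Set V) ∧ Dominating G {d₁, d₂})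

/-- `γ'MB(G) = 2`: Dominator wins the S-game within two moves but not within one. -/
def MBPrimeEqTwo {V : Type*} (G : SimpleGraph V) : Prop :=
  WinsWithin2 G ∧ ¬ WinsWithin1 G

/-- `G` is `2`-`γ'MB`-critical: `γ'MB(G) = 2` and for every edge `e`, Dominator does not
win the S-game on `G - e` within two moves. -/
def Critical2 {V : Type*} (G : SimpleGraph V) : Prop :=
  MBPrimeEqTwo G ∧ ∀ u v : V, G.Adj u v → ¬ WinsWithin2 (G.deleteEdges {s(u, v)})

/-- `v` is a universal vertex of the subgraph of `G` induced on `C`: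
`v ∈ C` and `v` is adjacent in `G` to every other vertex of `C`. -/
def UnivIn {V : Type*} (G : SimpleGraph V) (C : Set V) (v : V) : Prop :=
  v ∈ C ∧ ∀ u ∈ C, u ≠ v → G.Adj v u

/-- `G - x` has exactly two connected components, with vertex sets `C₁` and `C₂`. -/
def IsTwoComponents {V : Type*} (G : SimpleGraph V) (x : V) (C₁ C₂ : Set V) : Prop :=
  C₁.Nonempty ∧ C₂.Nonempty ∧ Disjoint C₁ C₂ ∧ C₁ ∪ C₂ = {x}ᶜ ∧
    (G.induce C₁).Connected ∧ (G.induce C₂).Connected ∧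
    ∀ u ∈ C₁, ∀ v ∈ C₂, ¬ G.Adj u v

open SimpleGraph

section

variable {V : Type*}

lemma Set.exists_eq_pair_of_mem {a d d' : V} (h : a ∈ ({d, d'} : Set V)) :
    ∃ w, ({d, d'} : Set V) = {a, w} := by
  rcases h with rfl | rfl
  · exact ⟨d', rfl⟩
  · exact ⟨d, Set.pair_comm _ _⟩

lemma SimpleGraph.Adj.deleteEdges_of_ne {G : SimpleGraph V} {p q u v w : V} (h : G.Adj p q)
    (hw : w = u ∨ w = v) (hp : p ≠ w) (hq : q ≠ w) : (G.deleteEdges {s(u, v)}).Adj p q := by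
  rw [deleteEdges_adj, Set.mem_singleton_iff]
  refine ⟨h, fun he => ?_⟩
  have : w ∈ s(p, q) := he ▸ (hw.elim (· ▸ Sym2.mem_mk_left _ _) (· ▸ Sym2.mem_mk_right _ _))
  rcases Sym2.mem_iff.1 this with rfl | rfl
  · exact hp rfl
  · exact hq rfl

lemma UnivIn.insert {G : SimpleGraph V} {C : Set V} {a x : V} (h : UnivIn G C a)
    (hax : G.Adj a x) : UnivIn G (insert x C) a :=
  ⟨Or.inr h.1, fun u hu hne => hu.elim (fun hux => hux ▸ hax) (h.2 u · hne)⟩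

lemma univIn_insert_self {G : SimpleGraph V} {C : Set V} {x : V} (h : ∀ u ∈ C, G.Adj x u) :
    UnivIn G (insert x C) x :=
  ⟨Set.mem_insert _ _, fun u hu hne => h u (hu.resolve_left hne)⟩

lemma Dominating.deleteEdges {G : SimpleGraph V} {D : Set V} {u v : V} (hD : Dominating G D)
    (hu : u ∈ D → v ∉ D → ∃ d ∈ D, d ≠ u ∧ G.Adj d v)
    (hv : v ∈ D → u ∉ D → ∃ d ∈ D, d ≠ v ∧ G.Adj d u) :
    Dominating (G.deleteEdges {s(u, v)}) D := by
  intro w hw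
  obtain ⟨d, hd, hdw⟩ := hD w hw
  by_cases he : s(d, w) = s(u, v)
  · rcases Sym2.eq_iff.1 he with ⟨rfl, rfl⟩ | ⟨rfl, rfl⟩
    · obtain ⟨d', hd', hne, hadj⟩ := hu hd hw
      exact ⟨d', hd', hadj.deleteEdges_of_ne (Or.inl rfl) hne hdw.ne.symm⟩
    · obtain ⟨d', hd', hne, hadj⟩ := hv hd hw
      exact ⟨d', hd', hadj.deleteEdges_of_ne (Or.inr rfl) hne hdw.ne.symm⟩
  · exact ⟨d, hd, by simpa [he] using hdw⟩

/-- Dominator answers from `B` when Staller opens in `B`, and from `A` otherwise; the second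
answer is taken from the other set. -/
lemma winsWithin2_of_forall_dominating {H : SimpleGraph V} {A B : Set V} (hAB : Disjoint A B)
    (hA : A.Nontrivial) (hB : B.Nontrivial) (hdom : ∀ a ∈ A, ∀ b ∈ B, Dominating H {a, b}) :
    WinsWithin2 H := by
  intro s₁
  by_cases hs₁ : s₁ ∈ B
  · obtain ⟨d₁, hd₁, hne₁⟩ := hB.exists_ne s₁
    refine ⟨d₁, hne₁, Or.inr fun s₂ _ => ?_⟩
    obtain ⟨d₂, hd₂, hne₂⟩ := hA.exists_ne s₂
    refine ⟨d₂, ?_, Set.pair_comm d₂ d₁ ▸ hdom d₂ hd₂ d₁ hd₁⟩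
    simp only [Set.mem_insert_iff, Set.mem_singleton_iff, not_or]
    exact ⟨hAB.ne_of_mem hd₂ hs₁, hAB.ne_of_mem hd₂ hd₁, hne₂⟩
  · obtain ⟨d₁, hd₁, hne₁⟩ := hA.exists_ne s₁
    refine ⟨d₁, hne₁, Or.inr fun s₂ _ => ?_⟩
    obtain ⟨d₂, hd₂, hne₂⟩ := hB.exists_ne s₂
    refine ⟨d₂, ?_, hdom d₁ hd₁ d₂ hd₂⟩
    simp only [Set.mem_insert_iff, Set.mem_singleton_iff, not_or]
    exact ⟨fun h => hs₁ (h ▸ hd₂), (hAB.ne_of_mem hd₁ hd₂).symm, hne₂⟩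

lemma WinsWithin2.of_dominating_pair {G H : SimpleGraph V} (hW : WinsWithin2 G)
    (hG : ∀ d, ¬ Dominating G {d}) (hGH : ∀ d d', Dominating G {d, d'} → Dominating H {d, d'}) :
    WinsWithin2 H := by
  intro s₁
  obtain ⟨d₁, hne, hsingle | hpair⟩ := hW s₁
  · exact absurd hsingle (hG d₁)
  · refine ⟨d₁, hne, Or.inr fun s₂ hs₂ => ?_⟩
    obtain ⟨d₂, hd₂, hD⟩ := hpair s₂ hs₂
    exact ⟨d₂, hd₂, hGH d₁ d₂ hD⟩

structure IsSeparation (G : SimpleGraph V) (x : V) (C₁ C₂ : Set V) : Prop where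
  nonempty_left : C₁.Nonempty
  nonempty_right : C₂.Nonempty
  disjoint : Disjoint C₁ C₂
  union_eq : C₁ ∪ C₂ = {x}ᶜ
  not_adj : ∀ u ∈ C₁, ∀ v ∈ C₂, ¬ G.Adj u v

lemma IsTwoComponents.isSeparation {G : SimpleGraph V} {x : V} {C₁ C₂ : Set V}
    (h : IsTwoComponents G x C₁ C₂) : IsSeparation G x C₁ C₂ :=
  ⟨h.1, h.2.1, h.2.2.1, h.2.2.2.1, h.2.2.2.2.2.2⟩

namespace IsSeparation

variable {G : SimpleGraph V} {x : V} {C₁ C₂ : Set V} (S : IsSeparation G x C₁ C₂)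
include S

lemma symm : IsSeparation G x C₂ C₁ :=
  ⟨S.nonempty_right, S.nonempty_left, S.disjoint.symm, Set.union_comm C₂ C₁ ▸ S.union_eq,
    fun u hu v hv h => S.not_adj v hv u hu h.symm⟩

lemma ne_of_mem_left {v : V} (hv : v ∈ C₁) : v ≠ x :=
  S.union_eq.subset (Or.inl hv)

lemma mem_or_mem {v : V} (hv : v ≠ x) : v ∈ C₁ ∨ v ∈ C₂ :=
  S.union_eq.superset hv

lemma not_mem_insert_left {v : V} (hv : v ∈ C₂) : v ∉ insert x C₁ := by
  rintro (rfl | h)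
  · exact S.symm.ne_of_mem_left hv rfl
  · exact S.disjoint.ne_of_mem h hv rfl

lemma eq_or_mem_of_adj {u v : V} (hv : v ∈ C₁) (h : G.Adj v u) : u = x ∨ u ∈ C₁ := by
  by_cases hu : u = x
  · exact Or.inl hu
  · exact Or.inr ((S.mem_or_mem hu).resolve_right fun hu₂ => S.not_adj v hv u hu₂ h)

lemma exists_adj_of_reachable {H : SimpleGraph V} (hH : H ≤ G) {u : V} (hu : u ∈ C₁)
    (h : H.Reachable u x) : ∃ z ∈ C₁, H.Adj z x := by
  obtain ⟨p⟩ := h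
  obtain ⟨d, -, hd, hd'⟩ := p.exists_boundary_dart C₁ hu (fun hx => S.ne_of_mem_left hx rfl)
  have hsnd : d.snd = x := (S.eq_or_mem_of_adj hd (hH d.adj)).resolve_right hd'
  exact ⟨d.fst, hd, hsnd ▸ d.adj⟩

lemma not_dominating_of_subset {D : Set V} (hD : D ⊆ C₁) : ¬ Dominating G D := by
  intro hdom
  obtain ⟨c, hc⟩ := S.nonempty_right
  obtain ⟨d, hd, hdc⟩ := hdom c fun hc' => S.disjoint.ne_of_mem (hD hc') hc rfl
  exact S.not_adj d (hD hd) c hc hdc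

lemma adj_of_dominating {D : Set V} (hdom : Dominating G D) (hD : D ⊆ insert x C₂) {u : V}
    (hu : u ∈ C₁) : G.Adj x u := by
  obtain ⟨d, hd, hdu⟩ := hdom u fun h => S.symm.not_mem_insert_left hu (hD h)
  rcases hD hd with rfl | hd₂
  · exact hdu
  · exact absurd hdu.symm (S.not_adj u hu d hd₂)

lemma univIn_of_dominating {D : Set V} (hdom : Dominating G D) {a : V} (hD : D ⊆ insert a C₂)
    (ha : a ∈ C₁) : UnivIn G C₁ a := by
  refine ⟨ha, fun u hu hua => ?_⟩
  obtain ⟨d, hd, hdu⟩ := hdom u fun h => (hD h).elim hua fun hu₂ => S.disjoint.ne_of_mem hu hu₂ rfl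
  rcases hD hd with rfl | hd₂
  · exact hdu
  · exact absurd hdu.symm (S.not_adj u hu d hd₂)

lemma univIn_of_dominating_pair {d d' : V} (hdom : Dominating G {d, d'}) (hd : d ∈ C₁)
    (hd' : d' ≠ x) : UnivIn G C₁ d ∧ UnivIn G C₂ d' := by
  have hd'₂ : d' ∈ C₂ := (S.mem_or_mem hd').resolve_left fun hd'₁ =>
    S.not_dominating_of_subset (Set.insert_subset hd (Set.singleton_subset_iff.2 hd'₁)) hdom
  exact ⟨S.univIn_of_dominating hdom (Set.insert_subset_insert (Set.singleton_subset_iff.2 hd'₂)) hd,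
    S.symm.univIn_of_dominating (Set.pair_comm d d' ▸ hdom)
      (Set.insert_subset_insert (Set.singleton_subset_iff.2 hd)) hd'₂⟩

lemma forall_adj_or_forall_adj {w : V} (hdom : Dominating G {x, w}) :
    (∀ u ∈ C₁, G.Adj x u) ∨ ∀ u ∈ C₂, G.Adj x u := by
  by_cases hw : w ∈ C₂
  · exact Or.inl fun u => S.adj_of_dominating hdom (Set.insert_subset_insert (by simpa using hw))
  · refine Or.inr fun u => S.symm.adj_of_dominating hdom
      (Set.insert_subset (Set.mem_insert x C₁) (Set.singleton_subset_iff.2 ?_))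
    by_cases hwx : w = x
    · exact hwx ▸ Set.mem_insert x C₁
    · exact Or.inr ((S.mem_or_mem hwx).resolve_right hw)

lemma not_dominating_singleton (hx : ¬ ∀ u ∈ C₁, G.Adj x u) (d : V) : ¬ Dominating G {d} := by
  intro hdom
  by_cases hdx : d = x
  · subst hdx
    exact hx fun u => S.adj_of_dominating hdom (Set.singleton_subset_iff.2 (Set.mem_insert _ _))
  · rcases S.mem_or_mem hdx with hd | hd
    · exact S.not_dominating_of_subset (Set.singleton_subset_iff.2 hd) hdom
    · exact S.symm.not_dominating_of_subset (Set.singleton_subset_iff.2 hd) hdom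

/-- Once Staller has taken `x` and Dominator has answered `d₁ ∈ C₁`, every answer to a second
Staller move in `C₂` is a universal vertex of `C₂`, so there are at least two of them. -/
lemma nontrivial_univIn_right {d₁ : V} (hd₁ : d₁ ∈ C₁)
    (h : ∀ s₂, s₂ ∉ ({x, d₁} : Set V) →
      ∃ d₂, d₂ ∉ ({x, d₁, s₂} : Set V) ∧ Dominating G {d₁, d₂}) :
    {b | UnivIn G C₂ b}.Nontrivial := by
  have hanswer : ∀ s ∈ C₂, ∃ b, b ≠ s ∧ UnivIn G C₂ b := by
    intro s hs
    obtain ⟨d₂, hd₂, hdom⟩ := h s (by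
      simp only [Set.mem_insert_iff, Set.mem_singleton_iff, not_or]
      exact ⟨S.symm.ne_of_mem_left hs, S.disjoint.ne_of_mem hd₁ hs ∘ Eq.symm⟩)
    simp only [Set.mem_insert_iff, Set.mem_singleton_iff, not_or] at hd₂
    exact ⟨d₂, hd₂.2.2, (S.univIn_of_dominating_pair hdom hd₁ hd₂.1).2⟩
  obtain ⟨c, hc⟩ := S.nonempty_right
  obtain ⟨b, -, hb⟩ := hanswer c hc
  obtain ⟨b', hb'b, hb'⟩ := hanswer b hb.1
  exact ⟨b', hb', b, hb, hb'b⟩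

lemma nontrivial_univIn_of_winsWithin2 (hW : WinsWithin2 G) :
    {a | UnivIn G C₁ a}.Nontrivial ∨ {b | UnivIn G C₂ b}.Nontrivial := by
  obtain ⟨d₁, hd₁x, hsingle | hpair⟩ := hW x
  · rcases S.mem_or_mem hd₁x with hd | hd
    · exact absurd hsingle (S.not_dominating_of_subset (Set.singleton_subset_iff.2 hd))
    · exact absurd hsingle (S.symm.not_dominating_of_subset (Set.singleton_subset_iff.2 hd))
  · rcases S.mem_or_mem hd₁x with hd | hd
    · exact Or.inr (S.nontrivial_univIn_right hd hpair)
    · exact Or.inl (S.symm.nontrivial_univIn_right hd hpair)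

lemma dominating_deleteEdges_pair {a b t : V} (ha : UnivIn G (insert x C₁) a)
    (hb : UnivIn G C₂ b) (ht : t ∈ C₂) : Dominating (G.deleteEdges {s(x, t)}) {a, b} := by
  intro v hv
  simp only [Set.mem_insert_iff, Set.mem_singleton_iff, not_or] at hv
  by_cases hv₁ : v ∈ insert x C₁
  · refine ⟨a, Set.mem_insert _ _, (ha.2 v hv₁ hv.1).deleteEdges_of_ne (Or.inr rfl) ?_ ?_⟩
    · exact fun hat => S.not_mem_insert_left ht (hat ▸ ha.1)
    · exact fun hvt => S.not_mem_insert_left ht (hvt ▸ hv₁)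
  · have hv₂ : v ∈ C₂ :=
      (S.mem_or_mem fun hvx => hv₁ (Or.inl hvx)).resolve_left fun h => hv₁ (Or.inr h)
    exact ⟨b, by simp, (hb.2 v hv₂ hv.2).deleteEdges_of_ne (Or.inl rfl)
      (S.symm.ne_of_mem_left hb.1) (S.symm.ne_of_mem_left hv₂)⟩

lemma winsWithin2_deleteEdges {t : V} (ht : t ∈ C₂) (hA : {a | UnivIn G (insert x C₁) a}.Nontrivial)
    (hB : {b | UnivIn G C₂ b}.Nontrivial) : WinsWithin2 (G.deleteEdges {s(x, t)}) :=
  winsWithin2_of_forall_dominating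
    (Set.disjoint_left.2 fun _ ha hb => S.not_mem_insert_left hb.1 ha.1) hA hB
    fun _ ha _ hb => S.dominating_deleteEdges_pair ha hb ht

lemma winsWithin2_deleteEdges_of_univIn (hW : WinsWithin2 G) {v : V} (hv : UnivIn G C₁ v)
    (hx₁ : ¬ ∀ u ∈ C₁, G.Adj x u) (hx₂ : ∀ u ∈ C₂, G.Adj x u) :
    WinsWithin2 (G.deleteEdges {s(x, v)}) := by
  refine hW.of_dominating_pair (S.not_dominating_singleton hx₁) fun d d' hdom => ?_
  refine hdom.deleteEdges (fun hx hvD => ?_) (fun hvD hx => ?_)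
  · obtain ⟨w, hD⟩ := Set.exists_eq_pair_of_mem hx
    rw [hD] at hdom hvD ⊢
    have hwx : w ≠ x := fun hwx => S.not_dominating_singleton hx₁ x (by simpa [hwx] using hdom)
    have hw : w ∈ C₁ := (S.mem_or_mem hwx).resolve_right fun hw₂ => hx₁ fun u =>
      S.adj_of_dominating hdom (Set.insert_subset_insert (Set.singleton_subset_iff.2 hw₂))
    have hwv : w ≠ v := fun h => hvD (by simp [h])
    exact ⟨w, by simp, hwx, (hv.2 w hw hwv).symm⟩
  · obtain ⟨w, hD⟩ := Set.exists_eq_pair_of_mem hvD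
    rw [hD] at hdom hx ⊢
    have hwx : w ≠ x := fun h => hx (by simp [h])
    have hw : w ∈ C₂ := (S.univIn_of_dominating_pair hdom hv.1 hwx).2.1
    exact ⟨w, by simp, fun h => S.disjoint.ne_of_mem hv.1 hw h.symm, (hx₂ w hw).symm⟩

lemma winsWithin2_deleteEdges_of_not_univIn (hW : WinsWithin2 G) {y : V} (hy : y ∈ C₁)
    (hyU : ¬ UnivIn G C₁ y) (hx₁ : ¬ ∀ u ∈ C₁, G.Adj x u) (hx₂ : ¬ ∀ u ∈ C₂, G.Adj x u) :
    WinsWithin2 (G.deleteEdges {s(x, y)}) := by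
  refine hW.of_dominating_pair (S.not_dominating_singleton hx₁) fun d d' hdom => ?_
  have hxD : x ∉ ({d, d'} : Set V) := by
    intro hx
    obtain ⟨w, hD⟩ := Set.exists_eq_pair_of_mem hx
    exact (S.forall_adj_or_forall_adj (hD ▸ hdom)).elim hx₁ hx₂
  have hyD : y ∉ ({d, d'} : Set V) := by
    intro hyD
    obtain ⟨w, hD⟩ := Set.exists_eq_pair_of_mem hyD
    rw [hD] at hdom hxD
    exact hyU (S.univIn_of_dominating_pair hdom hy fun h => hxD (by simp [h])).1
  exact hdom.deleteEdges (absurd · hxD) (absurd · hyD)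

end IsSeparation

end

theorem stmt11 {V : Type*} [Fintype V] (G : SimpleGraph V) (hconn : G.Connected)
    (x : V) (C₁ C₂ : Set V) (hcomp : IsTwoComponents G x C₁ C₂)
    (v₁ : V) (hv₁ : UnivIn G C₁ v₁)
    (hle : {v | UnivIn G C₁ v}.ncard ≤ {v | UnivIn G C₂ v}.ncard)
    (hadj : G.Adj v₁ x) (hbridge : ¬ G.IsBridge s(v₁, x)) :
    ¬ Critical2 G := by
  have S := hcomp.isSeparation
  rintro ⟨⟨hW, -⟩, hcrit⟩
  obtain ⟨c, hc⟩ := S.nonempty_right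
  obtain ⟨z, hz, hzx⟩ := S.symm.exists_adj_of_reachable le_rfl hc (hconn c x)
  obtain ⟨y, hy, hyx'⟩ := S.exists_adj_of_reachable (G.deleteEdges_le _) hv₁.1 (not_not.1 hbridge)
  obtain ⟨hyx, hyv⟩ : G.Adj y x ∧ y ≠ v₁ := by
    simp only [deleteEdges_adj, Set.mem_singleton_iff, Sym2.eq_iff] at hyx'
    exact ⟨hyx'.1, fun h => hyx'.2 (by simp [h])⟩
  have hB : {b | UnivIn G C₂ b}.Nontrivial := by
    refine (S.nontrivial_univIn_of_winsWithin2 hW).elim (fun hA => ?_) id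
    rw [← Set.one_lt_ncard_iff_nontrivial] at hA ⊢
    exact hA.trans_le hle
  by_cases hyU : UnivIn G C₁ y
  · exact hcrit x z hzx.symm (S.winsWithin2_deleteEdges hz
      (Set.nontrivial_of_mem_mem_ne (hv₁.insert hadj) (hyU.insert hyx) hyv.symm) hB)
  by_cases hx₁ : ∀ u ∈ C₁, G.Adj x u
  · exact hcrit x z hzx.symm (S.winsWithin2_deleteEdges hz
      (Set.nontrivial_of_mem_mem_ne (univIn_insert_self hx₁) (hv₁.insert hadj)
        (S.ne_of_mem_left hv₁.1).symm) hB)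
  by_cases hx₂ : ∀ u ∈ C₂, G.Adj x u
  · exact hcrit x v₁ hadj.symm (S.winsWithin2_deleteEdges_of_univIn hW hv₁ hx₁ hx₂)
  · exact hcrit x y hyx.symm (S.winsWithin2_deleteEdges_of_not_univIn hW hy hyU hx₁ hx₂)
end

section
/- Let G be a finite connected 2-γ'MB-critical graph with a cut-vertex x such that G − x has exactly two connected components C₁ and C₂. Suppose there exist two distinct universal vertices v₂ and v₃ of C₂ that are both adjacent to x in G, and that no universal vertex of C₁ is adjacent to x in G. Then G is isomorphic to a graph in the family 𝓕 ∪ 𝓕'. -/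
/-- The graph `H_m`, the join of `K₂` with the complement of `K_{m-2}`: the first two
vertices are adjacent to everything, the remaining vertices form an independent set.
(`H₀` is the null graph, `H₂ = K₂`.) -/
def HGraph (m : ℕ) : SimpleGraph (Fin m) :=
  SimpleGraph.fromRel (fun u _ => u.val < 2)

/-- Vertex type of `F_{m₁,t,m₂}`: a copy of `H_{m₁}`, a copy of `H_{m₂}`, the independent
set `B` of `t` vertices, and the two vertices `v₁ = inr (inr 0)` and `v₂ = inr (inr 1)`. -/
abbrev FVert (m₁ t m₂ : ℕ) : Type := (Fin m₁ ⊕ Fin m₂) ⊕ (Fin t ⊕ Fin 2)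

/-- The graph `F_{m₁,t,m₂}`: disjoint copies of `H_{m₁}` and `H_{m₂}`, an independent set
`B` of `t` vertices, and nonadjacent vertices `v₁, v₂`, where `v₁` is joined to `H_{m₁}`,
`v₂` is joined to `H_{m₂}`, and both `v₁` and `v₂` are joined to all of `B`. -/
def FGraph (m₁ t m₂ : ℕ) : SimpleGraph (FVert m₁ t m₂) :=
  SimpleGraph.fromRel (fun u v =>
    match u, v with
    | .inl (.inl a), .inl (.inl _) => a.val < 2   -- inside H_{m₁}
    | .inl (.inr a), .inl (.inr _) => a.val < 2   -- inside H_{m₂}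
    | .inr (.inr i), .inl (.inl _) => i = 0       -- v₁ to H_{m₁}
    | .inr (.inr i), .inl (.inr _) => i = 1       -- v₂ to H_{m₂}
    | .inr (.inr _), .inr (.inl _) => True        -- v₁, v₂ to B
    | _, _ => False)

/-- The conditions on the parameters of `F_{m₁,t,m₂}`. -/
def FCond (m₁ t m₂ : ℕ) : Prop :=
  (m₁ = 0 ∨ 2 ≤ m₁) ∧ m₁ ≤ m₂ ∧ 2 ≤ m₂ ∧ 1 ≤ t ∧ (m₁ = 0 → 2 ≤ t)

/-- Vertex type of `F'_{s,q,m}`: the part `{a, b}` of `K_{2,s}` (`a = inl (inl 0)`,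
`b = inl (inl 1)`), the `s`-part of `K_{2,s}`, the `q - 2` vertices `b₁, …, b_{q-2}`,
the vertex `v₁ = inr (inl ())`, the copy of `H_m`, and the vertex `x = inr (inr (inr ()))`. -/
abbrev F'Vert (s q m : ℕ) : Type :=
  (Fin 2 ⊕ (Fin s ⊕ Fin (q - 2))) ⊕ (Unit ⊕ (Fin m ⊕ Unit))

/-- The graph `F'_{s,q,m}`. -/
def F'Graph (s q m : ℕ) : SimpleGraph (F'Vert s q m) :=
  SimpleGraph.fromRel (fun u v =>
    match u, v with
    | .inl (.inl _), .inl (.inr (.inl _)) => True        -- {a, b} to the s-part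
    | .inr (.inl _), .inl _ => True                      -- v₁ to all of P
    | .inr (.inr (.inl h)), .inr (.inr (.inl _)) => h.val < 2  -- inside H_m
    | .inr (.inr (.inr _)), .inr (.inr (.inl _)) => True -- x to H_m
    | .inr (.inr (.inr _)), .inl (.inl _) => True        -- x to {a, b}
    | .inr (.inr (.inr _)), .inl (.inr (.inr _)) => True -- x to the bᵢ's
    | _, _ => False)

/-- `G` is isomorphic to a member of the family `𝓕 ∪ 𝓕'`. -/
def InFamilyFF' {V : Type*} (G : SimpleGraph V) : Prop :=
  (∃ m₁ t m₂ : ℕ, FCond m₁ t m₂ ∧ Nonempty (G ≃g FGraph m₁ t m₂)) ∨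
  (∃ s q m : ℕ, 2 ≤ s ∧ 2 ≤ q ∧ 2 ≤ m ∧ Nonempty (G ≃g F'Graph s q m))

/-!
A pair `{a, b}` avoiding `x` dominates `G` only if `a, b` are universal vertices of `C₁` and `C₂`
(in some order). Staller opening at `x` therefore forces a universal vertex `v₁` of `C₁`, which is
not adjacent to `x`; criticality of an edge from `x` into `C₁` makes `v₁` unique, and Staller
opening at `v₁` then forces two partners `r₁ ≠ r₂` of `x` in `C₁`, i.e. `{x, rᵢ}` dominates `G`.
In particular `x` is adjacent to all of `C₂`.

Conversely, Dominator wins on `G - ab` as soon as `{v₁, v₂}`, `{v₁, v₃}`, `{v₁, x}` and `{x, q}` for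
two partners `q` still dominate: he answers `v₁` by `x` and then a partner, and any other vertex by
`v₁` and then one of `x, v₂, v₃`. Criticality thus forbids most edges. What survives is a graph with
the two nonadjacent hubs `v₁` and `x`: the private neighbourhood `C₂` of `x` spans `H_m` with
dominating vertices `v₂, v₃`, and the private neighbourhood of `v₁` spans `H_m` with dominating
vertices `r₁, r₂` (family `𝓕`) unless the partners are adjacent to `x`, in which case it is
independent and completely joined to `r₁, r₂` (family `𝓕'`, or `𝓕` with `m₁ = 0` if it is empty).
-/

open Function

section Domination
variable {V : Type*} {G : SimpleGraph V}

theorem dominating_pair_iff {p q : V} :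
    Dominating G {p, q} ↔ ∀ v, v ≠ p → v ≠ q → G.Adj p v ∨ G.Adj q v := by
  simp [Dominating]

theorem Dominating.deleteEdges_edge {D : Set V} {a b : V} (hD : Dominating G D)
    (ha : a ∈ D → b ∉ D → ∃ d ∈ D, d ≠ a ∧ G.Adj d b)
    (hb : b ∈ D → a ∉ D → ∃ d ∈ D, d ≠ b ∧ G.Adj d a) :
    Dominating (G.deleteEdges {s(a, b)}) D := by
  intro v hv
  obtain ⟨d, hd, hdv⟩ := hD v hv
  by_cases he : s(d, v) = s(a, b)
  · rcases Sym2.eq_iff.1 he with ⟨rfl, rfl⟩ | ⟨rfl, rfl⟩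
    · obtain ⟨d', hd', hne, hadj⟩ := ha hd hv
      exact ⟨d', hd', hadj, by simp [hne, hadj.ne]⟩
    · obtain ⟨d', hd', hne, hadj⟩ := hb hd hv
      exact ⟨d', hd', hadj, by simp [hne, hadj.ne]⟩
  · exact ⟨d, hd, by simpa [he] using hdv⟩

theorem Dominating.deleteEdges_of_notMem {D : Set V} {a b : V} (hD : Dominating G D)
    (ha : a ∉ D) (hb : b ∉ D) : Dominating (G.deleteEdges {s(a, b)}) D :=
  hD.deleteEdges_edge (absurd · ha) (absurd · hb)

theorem Dominating.adj_of_not_adj {x r u : V} (hd : Dominating G {x, r}) (hux : u ≠ x) (hur : u ≠ r)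
    (hxu : ¬ G.Adj x u) : G.Adj r u :=
  (dominating_pair_iff.1 hd u hux hur).resolve_left hxu

theorem Dominating.deleteEdges_pair {x q a b : V} (hd : Dominating G {x, q}) (hax : a ≠ x)
    (hbx : b ≠ x) (hqa : q = a → G.Adj x b) (hqb : q = b → G.Adj x a) :
    Dominating (G.deleteEdges {s(a, b)}) {x, q} := by
  refine hd.deleteEdges_edge (fun ha _ => ⟨x, by simp, hax.symm, ?_⟩)
    (fun hb _ => ⟨x, by simp, hbx.symm, ?_⟩)
  · simp only [Set.mem_insert_iff, Set.mem_singleton_iff] at ha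
    exact hqa (ha.resolve_left hax).symm
  · simp only [Set.mem_insert_iff, Set.mem_singleton_iff] at hb
    exact hqb (hb.resolve_left hbx).symm

end Domination

section Game
variable {V : Type*} {G : SimpleGraph V}

theorem exists_ne_of_ne {a b : V} (hab : a ≠ b) (s : V) : ∃ c, (c = a ∨ c = b) ∧ c ≠ s := by
  by_cases ha : a = s
  · exact ⟨b, Or.inr rfl, fun hb => hab (ha.trans hb.symm)⟩
  · exact ⟨a, Or.inl rfl, ha⟩

theorem winsWithin2_of_two_partners
    (h : ∀ s₁, ∃ d₁ e e', d₁ ≠ s₁ ∧ e ≠ e' ∧ e ≠ s₁ ∧ e ≠ d₁ ∧ e' ≠ s₁ ∧ e' ≠ d₁ ∧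
      Dominating G {d₁, e} ∧ Dominating G {d₁, e'}) :
    WinsWithin2 G := by
  intro s₁
  obtain ⟨d₁, e, e', hd₁, hee', hes, hed, he's, he'd, hde, hde'⟩ := h s₁
  refine ⟨d₁, hd₁, Or.inr fun s₂ _ => ?_⟩
  by_cases hs₂ : e = s₂
  · subst hs₂
    exact ⟨e', by simp [he's, he'd, hee'.symm], hde'⟩
  · exact ⟨e, by simp [hes, hed, hs₂], hde⟩

theorem winsWithin2_of_grid {p₁ p₂ w₁ w₂ : V} (hp : p₁ ≠ p₂) (hw : w₁ ≠ w₂)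
    (h : ∀ p, p = p₁ ∨ p = p₂ → ∀ w, w = w₁ ∨ w = w₂ → p ≠ w ∧ Dominating G {p, w}) :
    WinsWithin2 G := by
  refine winsWithin2_of_two_partners fun s₁ => ?_
  by_cases hs : s₁ = w₁ ∨ s₁ = w₂
  · obtain ⟨w, hw', hws⟩ := exists_ne_of_ne hw s₁
    have h₁ := h p₁ (Or.inl rfl)
    have h₂ := h p₂ (Or.inr rfl)
    refine ⟨w, p₁, p₂, hws, hp, (h₁ s₁ hs).1, (h₁ w hw').1, (h₂ s₁ hs).1, (h₂ w hw').1, ?_, ?_⟩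
    exacts [Set.pair_comm p₁ w ▸ (h₁ w hw').2, Set.pair_comm p₂ w ▸ (h₂ w hw').2]
  · obtain ⟨p, hp', hps⟩ := exists_ne_of_ne hp s₁
    have h₁ := h p hp' w₁ (Or.inl rfl)
    have h₂ := h p hp' w₂ (Or.inr rfl)
    exact ⟨p, w₁, w₂, hps, hw, fun h => hs (Or.inl h.symm), h₁.1.symm,
      fun h => hs (Or.inr h.symm), h₂.1.symm, h₁.2, h₂.2⟩

theorem winsWithin2_of_hub {v x w₁ w₂ r₁ r₂ : V} (hvx : v ≠ x) (hw : w₁ ≠ w₂) (hr : r₁ ≠ r₂)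
    (hW : ∀ w, w = w₁ ∨ w = w₂ → v ≠ w ∧ x ≠ w ∧ Dominating G {v, w})
    (hR : ∀ r, r = r₁ ∨ r = r₂ → v ≠ r ∧ x ≠ r ∧ Dominating G {x, r})
    (hv : Dominating G {v, x}) :
    WinsWithin2 G := by
  refine winsWithin2_of_two_partners fun s₁ => ?_
  have h₁ := hW w₁ (Or.inl rfl)
  have h₂ := hW w₂ (Or.inr rfl)
  by_cases hsv : s₁ = v
  · subst hsv
    have h₁ := hR r₁ (Or.inl rfl)
    have h₂ := hR r₂ (Or.inr rfl)
    exact ⟨x, r₁, r₂, hvx.symm, hr, h₁.1.symm, h₁.2.1.symm, h₂.1.symm, h₂.2.1.symm, h₁.2.2, h₂.2.2⟩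
  by_cases hsx : s₁ = x
  · subst hsx
    exact ⟨v, w₁, w₂, fun h => hsv h.symm, hw, h₁.2.1.symm, h₁.1.symm, h₂.2.1.symm, h₂.1.symm,
      h₁.2.2, h₂.2.2⟩
  · obtain ⟨w, hw', hws⟩ := exists_ne_of_ne hw s₁
    have h := hW w hw'
    exact ⟨v, x, w, fun h => hsv h.symm, h.2.1, fun h => hsx h.symm, hvx.symm, hws, h.1.symm,
      hv, h.2.2⟩

theorem WinsWithin2.exists_response (hwin : WinsWithin2 G) {s₁ : V}
    (hnd : ∀ d, d ≠ s₁ → ¬ Dominating G {d}) :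
    ∃ d₁, d₁ ≠ s₁ ∧ ∀ s₂, s₂ ≠ s₁ → s₂ ≠ d₁ →
      ∃ d₂, d₂ ≠ s₁ ∧ d₂ ≠ d₁ ∧ d₂ ≠ s₂ ∧ Dominating G {d₁, d₂} := by
  obtain ⟨d₁, hd₁, hdom | hresp⟩ := hwin s₁
  · exact absurd hdom (hnd d₁ hd₁)
  · refine ⟨d₁, hd₁, fun s₂ h₁ h₂ => ?_⟩
    obtain ⟨d₂, hd₂, hdom⟩ := hresp s₂ (by simp [h₁, h₂])
    simp only [Set.mem_insert_iff, Set.mem_singleton_iff, not_or] at hd₂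
    exact ⟨d₂, hd₂.1, hd₂.2.1, hd₂.2.2, hdom⟩

end Game

def xPartners {V : Type*} (G : SimpleGraph V) (x v₁ : V) (C₁ : Set V) : Set V :=
  {c | c ∈ C₁ ∧ c ≠ v₁ ∧ Dominating G {x, c}}

namespace IsTwoComponents
variable {V : Type*} {G : SimpleGraph V} {x v₁ : V} {C₁ C₂ : Set V}

theorem symm (h : IsTwoComponents G x C₁ C₂) : IsTwoComponents G x C₂ C₁ :=
  ⟨h.2.1, h.1, h.2.2.1.symm, (Set.union_comm _ _).trans h.2.2.2.1, h.2.2.2.2.2.1, h.2.2.2.2.1,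
    fun u hu v hv huv => h.2.2.2.2.2.2 v hv u hu huv.symm⟩

theorem eq_or_mem (h : IsTwoComponents G x C₁ C₂) (v : V) : v = x ∨ v ∈ C₁ ∨ v ∈ C₂ := by
  by_cases hv : v = x
  · exact Or.inl hv
  · exact Or.inr (h.2.2.2.1 ▸ hv : v ∈ C₁ ∪ C₂)

theorem ne_of_mem_left (h : IsTwoComponents G x C₁ C₂) {v : V} (hv : v ∈ C₁) : v ≠ x :=
  (h.2.2.2.1 ▸ Set.mem_union_left C₂ hv : v ∈ ({x}ᶜ : Set V))

theorem ne_of_mem_right (h : IsTwoComponents G x C₁ C₂) {v : V} (hv : v ∈ C₂) : v ≠ x :=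
  h.symm.ne_of_mem_left hv

theorem ne_of_mem_of_mem (h : IsTwoComponents G x C₁ C₂) {u v : V} (hu : u ∈ C₁) (hv : v ∈ C₂) :
    u ≠ v :=
  fun huv => Set.disjoint_left.1 h.2.2.1 hu (huv ▸ hv)

theorem not_adj (h : IsTwoComponents G x C₁ C₂) {u v : V} (hu : u ∈ C₁) (hv : v ∈ C₂) :
    ¬ G.Adj u v :=
  h.2.2.2.2.2.2 u hu v hv

theorem univIn_of_dominating_of_mem_left (h : IsTwoComponents G x C₁ C₂) {a b : V} (ha : a ∈ C₁)
    (hb : b ≠ x) (hd : Dominating G {a, b}) : UnivIn G C₁ a ∧ UnivIn G C₂ b := by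
  have hb₂ : b ∈ C₂ := by
    rcases h.eq_or_mem b with rfl | hb₁ | hb₂
    · exact absurd rfl hb
    · obtain ⟨c, hc⟩ := h.2.1
      rcases dominating_pair_iff.1 hd c (h.ne_of_mem_of_mem ha hc).symm
        (h.ne_of_mem_of_mem hb₁ hc).symm with hac | hbc
      exacts [absurd hac (h.not_adj ha hc), absurd hbc (h.not_adj hb₁ hc)]
    · exact hb₂
  refine ⟨⟨ha, fun u hu hua => ?_⟩, ⟨hb₂, fun u hu hub => ?_⟩⟩
  · exact (dominating_pair_iff.1 hd u hua (h.ne_of_mem_of_mem hu hb₂)).resolve_right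
      fun hbu => h.not_adj hu hb₂ hbu.symm
  · exact (dominating_pair_iff.1 hd u (h.ne_of_mem_of_mem ha hu).symm hub).resolve_left
      (h.not_adj ha hu)

theorem univIn_of_dominating (h : IsTwoComponents G x C₁ C₂) {a b : V} (ha : a ≠ x) (hb : b ≠ x)
    (hd : Dominating G {a, b}) :
    (UnivIn G C₁ a ∧ UnivIn G C₂ b) ∨ (UnivIn G C₁ b ∧ UnivIn G C₂ a) := by
  rcases h.eq_or_mem a with rfl | ha₁ | ha₂
  · exact absurd rfl ha
  · exact Or.inl (h.univIn_of_dominating_of_mem_left ha₁ hb hd)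
  · exact Or.inr (h.symm.univIn_of_dominating_of_mem_left ha₂ hb hd).symm

theorem not_dominating_singleton (h : IsTwoComponents G x C₁ C₂) {d : V} (hd : d ≠ x) :
    ¬ Dominating G {d} := fun hdom => by
  rw [← Set.pair_eq_singleton] at hdom
  rcases h.univIn_of_dominating hd hd hdom with ⟨h₁, h₂⟩ | ⟨h₁, h₂⟩ <;>
    exact h.ne_of_mem_of_mem h₁.1 h₂.1 rfl

theorem dominating_pair_of_univIn (h : IsTwoComponents G x C₁ C₂) {p w : V} (hp : UnivIn G C₁ p)
    (hw : UnivIn G C₂ w) (hwx : G.Adj w x) : Dominating G {p, w} := by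
  refine dominating_pair_iff.2 fun v hvp hvw => ?_
  rcases h.eq_or_mem v with rfl | hv | hv
  exacts [Or.inr hwx, Or.inl (hp.2 v hv hvp), Or.inr (hw.2 v hv hvw)]

theorem exists_univIn_of_winsWithin2 (h : IsTwoComponents G x C₁ C₂) (hwin : WinsWithin2 G) :
    (∃ p, UnivIn G C₁ p) ∧ ∃ q, UnivIn G C₂ q := by
  obtain ⟨d₁, hd₁, hresp⟩ := hwin.exists_response fun d hd => h.not_dominating_singleton hd
  obtain ⟨c₁, hc₁⟩ := h.1
  obtain ⟨c₂, hc₂⟩ := h.2.1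
  obtain ⟨s₂, hs₂, hs₂d⟩ := exists_ne_of_ne (h.ne_of_mem_of_mem hc₁ hc₂) d₁
  have hs₂x : s₂ ≠ x := by
    rcases hs₂ with rfl | rfl
    exacts [h.ne_of_mem_left hc₁, h.ne_of_mem_right hc₂]
  obtain ⟨d₂, hd₂, -, -, hdom⟩ := hresp s₂ hs₂x hs₂d
  rcases h.univIn_of_dominating hd₁ hd₂ hdom with ⟨h₁, h₂⟩ | ⟨h₁, h₂⟩
  exacts [⟨⟨_, h₁⟩, ⟨_, h₂⟩⟩, ⟨⟨_, h₁⟩, ⟨_, h₂⟩⟩]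

theorem exists_adj_of_connected (h : IsTwoComponents G x C₁ C₂) (hconn : G.Connected) :
    ∃ c ∈ C₁, G.Adj x c := by
  obtain ⟨c₁, hc₁⟩ := h.1
  obtain ⟨c₂, hc₂⟩ := h.2.1
  obtain ⟨d, -, hd₁, hd₂⟩ := (hconn.preconnected c₁ c₂).some.exists_boundary_dart C₁ hc₁
    fun hc => Set.disjoint_left.1 h.2.2.1 hc hc₂
  rcases h.eq_or_mem d.snd with hx | hd | hd
  · exact ⟨d.fst, hd₁, hx ▸ d.adj.symm⟩
  · exact absurd hd hd₂
  · exact absurd d.adj (h.not_adj hd₁ hd)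

theorem univIn_left_unique (h : IsTwoComponents G x C₁ C₂)
    (hcrit : ∀ u v, G.Adj u v → ¬ WinsWithin2 (G.deleteEdges {s(u, v)}))
    {v₂ v₃ c p p' : V} (hne : v₂ ≠ v₃) (hv₂ : UnivIn G C₂ v₂) (hv₃ : UnivIn G C₂ v₃)
    (hadj₂ : G.Adj v₂ x) (hadj₃ : G.Adj v₃ x) (hc : c ∈ C₁) (hxc : G.Adj x c)
    (hp : UnivIn G C₁ p) (hp' : UnivIn G C₁ p') (hpx : ¬ G.Adj p x) (hp'x : ¬ G.Adj p' x) :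
    p = p' := by
  by_contra hpp
  refine hcrit x c hxc (winsWithin2_of_grid hpp hne fun q hq w hw => ?_)
  obtain ⟨hqU, hqx⟩ : UnivIn G C₁ q ∧ ¬ G.Adj q x := by
    rcases hq with rfl | rfl
    exacts [⟨hp, hpx⟩, ⟨hp', hp'x⟩]
  obtain ⟨hwU, hwx⟩ : UnivIn G C₂ w ∧ G.Adj w x := by
    rcases hw with rfl | rfl
    exacts [⟨hv₂, hadj₂⟩, ⟨hv₃, hadj₃⟩]
  refine ⟨h.ne_of_mem_of_mem hqU.1 hwU.1,
    (h.dominating_pair_of_univIn hqU hwU hwx).deleteEdges_of_notMem ?_ ?_⟩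
  · simp [(h.ne_of_mem_left hqU.1).symm, (h.ne_of_mem_right hwU.1).symm]
  · have hcq : c ≠ q := fun hcq => hqx (hcq ▸ hxc.symm)
    simp [hcq, h.ne_of_mem_of_mem hc hwU.1]

theorem mem_left_of_dominating {c : V} (h : IsTwoComponents G x C₁ C₂) (hv₁ : v₁ ∈ C₁)
    (hv₁x : ¬ G.Adj v₁ x) (hcx : c ≠ x) (hd : Dominating G {x, c}) : c ∈ C₁ := by
  by_cases hcv : c = v₁
  · exact hcv ▸ hv₁
  rcases dominating_pair_iff.1 hd v₁ (h.ne_of_mem_left hv₁) (Ne.symm hcv) with hxv | hcv₁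
  · exact absurd hxv.symm hv₁x
  rcases h.eq_or_mem c with rfl | hc | hc
  exacts [absurd rfl hcx, hc, absurd hcv₁.symm (h.not_adj hv₁ hc)]

theorem adj_of_dominating_of_mem_right {c z : V} (h : IsTwoComponents G x C₁ C₂) (hc : c ∈ C₁)
    (hd : Dominating G {x, c}) (hz : z ∈ C₂) : G.Adj x z :=
  (dominating_pair_iff.1 hd z (h.ne_of_mem_right hz) (h.ne_of_mem_of_mem hc hz).symm).resolve_right
    (h.not_adj hc hz)

theorem exists_two_xPartners (h : IsTwoComponents G x C₁ C₂) (hwin : WinsWithin2 G)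
    (hv₁ : v₁ ∈ C₁) (hv₁x : ¬ G.Adj v₁ x) (huniq : ∀ p, UnivIn G C₁ p → p = v₁) :
    ∃ r₁ r₂, r₁ ≠ r₂ ∧ r₁ ∈ xPartners G x v₁ C₁ ∧ r₂ ∈ xPartners G x v₁ C₁ := by
  have hnd : ∀ d, d ≠ v₁ → ¬ Dominating G {d} := fun d _ hdom => by
    by_cases hd : d = x
    · obtain ⟨e, rfl, hev⟩ := hdom v₁ (by simpa [hd] using h.ne_of_mem_left hv₁)
      exact hv₁x (hd ▸ hev).symm
    · exact h.not_dominating_singleton hd hdom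
  obtain ⟨d₁, hd₁, hresp⟩ := hwin.exists_response hnd
  by_cases hd₁x : d₁ = x
  · subst d₁
    have hpartner : ∀ s, s ≠ v₁ → s ≠ x → ∃ r ∈ xPartners G x v₁ C₁, r ≠ s := fun s hs hsx => by
      obtain ⟨d₂, hd₂v, hd₂x, hd₂s, hdom⟩ := hresp s hs hsx
      exact ⟨d₂, ⟨h.mem_left_of_dominating hv₁ hv₁x hd₂x hdom, hd₂v, hdom⟩, hd₂s⟩
    obtain ⟨z, hz⟩ := h.2.1
    obtain ⟨r, hr, -⟩ := hpartner z (h.ne_of_mem_of_mem hv₁ hz).symm (h.ne_of_mem_right hz)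
    obtain ⟨r', hr', hr'r⟩ := hpartner r hr.2.1 (h.ne_of_mem_left hr.1)
    exact ⟨r, r', hr'r.symm, hr, hr'⟩
  -- otherwise Staller takes `x`, and the answer would make a second vertex universal in `C₁`
  · obtain ⟨d₂, hd₂v, -, hd₂x, hdom⟩ := hresp x (h.ne_of_mem_left hv₁).symm (Ne.symm hd₁x)
    rcases h.univIn_of_dominating hd₁x hd₂x hdom with ⟨h₁, -⟩ | ⟨h₁, -⟩
    exacts [absurd (huniq _ h₁) hd₁, absurd (huniq _ h₁) hd₂v]

end IsTwoComponents


namespace Set.Finite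
variable {V : Type*} {A T : Set V}

theorem exists_enum_subset_first (hA : A.Finite) (hT : T ⊆ A) :
    ∃ f : Fin A.ncard → V, Injective f ∧ range f = A ∧ ∀ i, f i ∈ T ↔ (i : ℕ) < T.ncard := by
  have : Finite T := (hA.subset hT).to_subtype
  have : Finite ↥(A \ T) := (hA.subset sdiff_subset).to_subtype
  let u : Fin T.ncard → V := Subtype.val ∘ (Finite.equivFin T).symm
  let v : Fin (A \ T).ncard → V := Subtype.val ∘ (Finite.equivFin ↥(A \ T)).symm
  have hu : ∀ i, u i ∈ T := fun i => ((Finite.equivFin T).symm i).2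
  have hv : ∀ i, v i ∈ A \ T := fun i => ((Finite.equivFin ↥(A \ T)).symm i).2
  rw [← ncard_sdiff_add_ncard_of_subset hT hA, add_comm]
  refine ⟨Sum.elim u v ∘ finSumFinEquiv.symm, ?_, ?_, fun i => ?_⟩
  · refine (Sum.elim_injective.2 ⟨?_, ?_, fun i j (h : u i = v j) => (hv j).2 (h ▸ hu i)⟩).comp
      finSumFinEquiv.symm.injective
    · exact Subtype.val_injective.comp (Finite.equivFin T).symm.injective
    · exact Subtype.val_injective.comp (Finite.equivFin _).symm.injective
  · have hu : range u = T := (EquivLike.range_comp _ _).trans Subtype.range_coe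
    have hv : range v = A \ T := (EquivLike.range_comp _ _).trans Subtype.range_coe
    rw [EquivLike.range_comp, Sum.elim_range, hu, hv, union_sdiff_cancel hT]
  · refine Fin.addCases (fun j => ?_) (fun j => ?_) i
    · simp [hu j]
    · simp [(hv j).2]

theorem exists_enum (hA : A.Finite) : ∃ f : Fin A.ncard → V, Injective f ∧ range f = A :=
  let ⟨f, hf, hrange, _⟩ := hA.exists_enum_subset_first (empty_subset A)
  ⟨f, hf, hrange⟩

theorem exists_enum_pair_first (hA : A.Finite) (h : A = ∅ ∨ (T ⊆ A ∧ T.ncard = 2)) :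
    ∃ f : Fin A.ncard → V, Injective f ∧ range f = A ∧ ∀ i, f i ∈ T ↔ (i : ℕ) < 2 := by
  rcases h with rfl | ⟨hT, h⟩
  · obtain ⟨f, hf, hrange⟩ := hA.exists_enum
    exact ⟨f, hf, hrange, fun i => absurd i.2 (by simp)⟩
  · obtain ⟨f, hf, hrange, hfT⟩ := hA.exists_enum_subset_first hT
    exact ⟨f, hf, hrange, fun i => by rw [hfT, h]⟩

end Set.Finite

/-- `u w` is an edge of a copy of `H_{|A|}` on `A` whose two dominating vertices form `T`. -/
def IsHEdge {V : Type*} (A T : Set V) (u w : V) : Prop :=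
  u ∈ A ∧ w ∈ A ∧ (u ∈ T ∨ w ∈ T)

/-! Members of `𝓕` and `𝓕'` are recognised through two nonadjacent vertices `a, b` adjacent to
all other vertices: the private neighbourhoods of `a` and of `b` and their common neighbourhood
are the blocks of the construction. -/

namespace SimpleGraph
variable {V : Type*} {G : SimpleGraph V} {a b v : V}

theorem adj_and_ne_of_mem_sdiff_neighborSet (hnadj : ¬ G.Adj a b)
    (hv : v ∈ G.neighborSet a \ G.neighborSet b) :
    (G.Adj a v ∧ G.Adj v a ∧ ¬ G.Adj b v ∧ ¬ G.Adj v b) ∧ v ≠ a ∧ v ≠ b :=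
  ⟨⟨hv.1, hv.1.symm, hv.2, fun h => hv.2 h.symm⟩, (G.ne_of_adj hv.1).symm,
    fun h => hnadj (h ▸ hv.1)⟩

theorem adj_and_ne_of_mem_commonNeighbors (hv : v ∈ G.commonNeighbors a b) :
    (G.Adj a v ∧ G.Adj v a ∧ G.Adj b v ∧ G.Adj v b) ∧ v ≠ a ∧ v ≠ b :=
  ⟨⟨hv.1, hv.1.symm, hv.2, hv.2.symm⟩, (G.ne_of_adj hv.1).symm, (G.ne_of_adj hv.2).symm⟩

theorem eq_or_mem_of_adj_or_adj (hcover : ∀ v, v ≠ a → v ≠ b → G.Adj a v ∨ G.Adj b v) (v : V) :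
    v = a ∨ v = b ∨ v ∈ G.neighborSet a \ G.neighborSet b ∨
      v ∈ G.neighborSet b \ G.neighborSet a ∨ v ∈ G.commonNeighbors a b := by
  by_cases hva : v = a
  · exact Or.inl hva
  by_cases hvb : v = b
  · exact Or.inr (Or.inl hvb)
  by_cases ha : G.Adj a v <;> by_cases hb : G.Adj b v
  · exact .inr (.inr (.inr (.inr ⟨ha, hb⟩)))
  · exact .inr (.inr (.inl ⟨ha, hb⟩))
  · exact .inr (.inr (.inr (.inl ⟨hb, ha⟩)))
  · exact ((hcover v hva hvb).elim ha hb).elim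

theorem nonempty_iso_FGraph [Finite V] {T T' : Set V} (hab : a ≠ b) (hnadj : ¬ G.Adj a b)
    (hcover : ∀ v, v ≠ a → v ≠ b → G.Adj a v ∨ G.Adj b v)
    (hT : G.neighborSet a \ G.neighborSet b = ∅ ∨
      (T ⊆ G.neighborSet a \ G.neighborSet b ∧ T.ncard = 2))
    (hT' : G.neighborSet b \ G.neighborSet a = ∅ ∨
      (T' ⊆ G.neighborSet b \ G.neighborSet a ∧ T'.ncard = 2))
    (hadj : ∀ u w, u ≠ a → u ≠ b → w ≠ a → w ≠ b → (G.Adj u w ↔ u ≠ w ∧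
      (IsHEdge (G.neighborSet a \ G.neighborSet b) T u w ∨
        IsHEdge (G.neighborSet b \ G.neighborSet a) T' u w))) :
    Nonempty (G ≃g FGraph (G.neighborSet a \ G.neighborSet b).ncard
      (G.commonNeighbors a b).ncard (G.neighborSet b \ G.neighborSet a).ncard) := by
  obtain ⟨fH, hHinj, hHr, hHT⟩ := (Set.toFinite _).exists_enum_pair_first hT
  obtain ⟨fK, hKinj, hKr, hKT⟩ := (Set.toFinite _).exists_enum_pair_first hT'
  obtain ⟨fB, hBinj, hBr⟩ := (Set.toFinite (G.commonNeighbors a b)).exists_enum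
  have hnadj' : ¬ G.Adj b a := fun h => hnadj h.symm
  have hH := fun i => adj_and_ne_of_mem_sdiff_neighborSet (v := fH i) hnadj
    (hHr ▸ Set.mem_range_self i)
  have hK := fun j => adj_and_ne_of_mem_sdiff_neighborSet (v := fK j) hnadj'
    (hKr ▸ Set.mem_range_self j)
  have hB := fun k => adj_and_ne_of_mem_commonNeighbors (v := fB k) (hBr ▸ Set.mem_range_self k)
  let g : FVert _ _ _ → V := Sum.elim (Sum.elim fH fK) (Sum.elim fB ![a, b])
  have hg : Bijective g := by
    refine ⟨fun p q h => ?_, fun v => ?_⟩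
    · have ha := congrArg (G.Adj a) h
      have hb := congrArg (G.Adj b) h
      rcases p with (i | j) | (k | c) <;> rcases q with (i' | j') | (k' | c')
      all_goals try fin_cases c
      all_goals try fin_cases c'
      all_goals
        simp [g, hH, hK, hB, hnadj, hnadj', hab, hab.symm, hHinj.eq_iff, hKinj.eq_iff,
          hBinj.eq_iff] at h ha hb ⊢
        try assumption
    · rcases eq_or_mem_of_adj_or_adj hcover v with rfl | rfl | hv | hv | hv
      · exact ⟨.inr (.inr 0), rfl⟩
      · exact ⟨.inr (.inr 1), rfl⟩
      · obtain ⟨i, rfl⟩ : v ∈ Set.range fH := by rwa [hHr]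
        exact ⟨.inl (.inl i), rfl⟩
      · obtain ⟨j, rfl⟩ : v ∈ Set.range fK := by rwa [hKr]
        exact ⟨.inl (.inr j), rfl⟩
      · obtain ⟨k, rfl⟩ : v ∈ Set.range fB := by rwa [hBr]
        exact ⟨.inr (.inl k), rfl⟩
  refine ⟨(Iso.symm ⟨Equiv.ofBijective g hg, fun {p q} => ?_⟩)⟩
  rcases p with (i | j) | (k | c) <;> rcases q with (i' | j') | (k' | c')
  all_goals try fin_cases c
  all_goals try fin_cases c'
  all_goals simp [g, FGraph, fromRel_adj, hadj, IsHEdge, hH, hK, hB, hnadj, hnadj', hab.symm,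
    hHinj.eq_iff, hKinj.eq_iff, hBinj.eq_iff, hHT, hKT]

theorem inFamilyFF'_of_F_shape [Finite V] {T T' : Set V} (hab : a ≠ b) (hnadj : ¬ G.Adj a b)
    (hcover : ∀ v, v ≠ a → v ≠ b → G.Adj a v ∨ G.Adj b v)
    (hT : G.neighborSet a \ G.neighborSet b = ∅ ∨
      (T ⊆ G.neighborSet a \ G.neighborSet b ∧ T.ncard = 2))
    (hT' : T' ⊆ G.neighborSet b \ G.neighborSet a) (hT'2 : T'.ncard = 2)
    (hC : (G.commonNeighbors a b).Nonempty)
    (hC2 : G.neighborSet a \ G.neighborSet b = ∅ → 2 ≤ (G.commonNeighbors a b).ncard)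
    (hadj : ∀ u w, u ≠ a → u ≠ b → w ≠ a → w ≠ b → (G.Adj u w ↔ u ≠ w ∧
      (IsHEdge (G.neighborSet a \ G.neighborSet b) T u w ∨
        IsHEdge (G.neighborSet b \ G.neighborSet a) T' u w))) :
    InFamilyFF' G := by
  have hm₁ : (G.neighborSet a \ G.neighborSet b).ncard = 0 ∨
      2 ≤ (G.neighborSet a \ G.neighborSet b).ncard :=
    hT.imp (fun h => by simp [h]) fun ⟨hsub, h⟩ => h ▸ Set.ncard_le_ncard hsub
  have hm₂ : 2 ≤ (G.neighborSet b \ G.neighborSet a).ncard := hT'2 ▸ Set.ncard_le_ncard hT'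
  have ht : 1 ≤ (G.commonNeighbors a b).ncard := (Set.ncard_pos (Set.toFinite _)).2 hC
  rcases le_total (G.neighborSet a \ G.neighborSet b).ncard
    (G.neighborSet b \ G.neighborSet a).ncard with h | h
  · exact Or.inl ⟨_, _, _,
      ⟨hm₁, h, hm₂, ht, fun h0 => hC2 ((Set.ncard_eq_zero (Set.toFinite _)).1 h0)⟩,
      nonempty_iso_FGraph hab hnadj hcover hT (Or.inr ⟨hT', hT'2⟩) hadj⟩
  · have hiso := nonempty_iso_FGraph hab.symm (fun h => hnadj h.symm)
      (fun v hb ha => (hcover v ha hb).symm) (Or.inr ⟨hT', hT'2⟩) hT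
      fun u w hub hua hwb hwa => (hadj u w hua hub hwa hwb).trans (and_congr_right fun _ => or_comm)
    rw [commonNeighbors_symm] at hiso
    exact Or.inl ⟨_, _, _, ⟨Or.inr hm₂, h, hm₂.trans h, ht, fun h0 => by omega⟩, hiso⟩

theorem bijective_F'Vert_elim {s n m : ℕ} {c₁ c₂ : V} {fD : Fin s → V} {fC : Fin n → V}
    {fK : Fin m → V} (hab : a ≠ b) (hnadj : ¬ G.Adj a b)
    (hcover : ∀ v, v ≠ a → v ≠ b → G.Adj a v ∨ G.Adj b v) (hc : c₁ ≠ c₂)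
    (hc₁ : c₁ ∈ G.commonNeighbors a b) (hc₂ : c₂ ∈ G.commonNeighbors a b)
    (hDinj : Injective fD) (hDr : Set.range fD = G.neighborSet a \ G.neighborSet b)
    (hCinj : Injective fC) (hCr : Set.range fC = G.commonNeighbors a b \ {c₁, c₂})
    (hKinj : Injective fK) (hKr : Set.range fK = G.neighborSet b \ G.neighborSet a) :
    Bijective (Sum.elim (Sum.elim ![c₁, c₂] (Sum.elim fD fC))
      (Sum.elim (fun _ => a) (Sum.elim fK fun _ => b)) : F'Vert s (n + 2) m → V) := by
  have hnadj' : ¬ G.Adj b a := fun h => hnadj h.symm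
  have hD := fun i => adj_and_ne_of_mem_sdiff_neighborSet (v := fD i) hnadj
    (hDr ▸ Set.mem_range_self i)
  have hC := fun k => (hCr ▸ Set.mem_range_self k : fC k ∈ G.commonNeighbors a b \ {c₁, c₂})
  have hC' := fun k => adj_and_ne_of_mem_commonNeighbors (hC k).1
  have hCc : ∀ k, ¬ (fC k = c₁ ∨ fC k = c₂) := fun k => (hC k).2
  have hK := fun j => adj_and_ne_of_mem_sdiff_neighborSet (v := fK j) hnadj'
    (hKr ▸ Set.mem_range_self j)
  refine ⟨fun p q h => ?_, fun v => ?_⟩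
  · have ha := congrArg (G.Adj a) h
    have hb := congrArg (G.Adj b) h
    have hcc := congrArg (· ∈ ({c₁, c₂} : Set V)) h
    rcases p with (c | (i | k)) | (_ | (j | _)) <;> rcases q with (c' | (i' | k')) | (_ | (j' | _))
    all_goals try fin_cases c
    all_goals try fin_cases c'
    all_goals
      simp [hD, hC', hCc, hK, adj_and_ne_of_mem_commonNeighbors hc₁,
        adj_and_ne_of_mem_commonNeighbors hc₂, hnadj, hnadj', hc, hc.symm, hab, hab.symm,
        hDinj.eq_iff, hCinj.eq_iff, hKinj.eq_iff] at h ha hb hcc ⊢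
      try assumption
  · rcases eq_or_mem_of_adj_or_adj hcover v with rfl | rfl | hv | hv | hv
    · exact ⟨.inr (.inl ()), rfl⟩
    · exact ⟨.inr (.inr (.inr ())), rfl⟩
    · obtain ⟨i, rfl⟩ : v ∈ Set.range fD := by rwa [hDr]
      exact ⟨.inl (.inr (.inl i)), rfl⟩
    · obtain ⟨j, rfl⟩ : v ∈ Set.range fK := by rwa [hKr]
      exact ⟨.inr (.inr (.inl j)), rfl⟩
    · by_cases hv₁ : v = c₁
      · exact ⟨.inl (.inl 0), hv₁.symm⟩
      by_cases hv₂ : v = c₂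
      · exact ⟨.inl (.inl 1), hv₂.symm⟩
      obtain ⟨k, rfl⟩ : v ∈ Set.range fC := by rw [hCr]; exact ⟨hv, by simp [hv₁, hv₂]⟩
      exact ⟨.inl (.inr (.inr k)), rfl⟩

theorem inFamilyFF'_of_F'_shape [Finite V] {c₁ c₂ : V} {T' : Set V} (hab : a ≠ b)
    (hnadj : ¬ G.Adj a b) (hcover : ∀ v, v ≠ a → v ≠ b → G.Adj a v ∨ G.Adj b v)
    (hc : c₁ ≠ c₂) (hc₁ : c₁ ∈ G.commonNeighbors a b) (hc₂ : c₂ ∈ G.commonNeighbors a b)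
    (hD2 : 2 ≤ (G.neighborSet a \ G.neighborSet b).ncard)
    (hT' : T' ⊆ G.neighborSet b \ G.neighborSet a) (hT'2 : T'.ncard = 2)
    (hadj : ∀ u w, u ≠ a → u ≠ b → w ≠ a → w ≠ b → (G.Adj u w ↔ u ≠ w ∧
      (((u ∈ ({c₁, c₂} : Set V) ∧ w ∈ G.neighborSet a \ G.neighborSet b) ∨
        (w ∈ ({c₁, c₂} : Set V) ∧ u ∈ G.neighborSet a \ G.neighborSet b)) ∨
        IsHEdge (G.neighborSet b \ G.neighborSet a) T' u w))) :
    InFamilyFF' G := by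
  obtain ⟨fD, hDinj, hDr⟩ := (Set.toFinite (G.neighborSet a \ G.neighborSet b)).exists_enum
  obtain ⟨fC, hCinj, hCr⟩ := (Set.toFinite (G.commonNeighbors a b \ {c₁, c₂})).exists_enum
  obtain ⟨fK, hKinj, hKr, hKT⟩ := (Set.toFinite _).exists_enum_pair_first (Or.inr ⟨hT', hT'2⟩)
  have hnadj' : ¬ G.Adj b a := fun h => hnadj h.symm
  have hD := fun i => adj_and_ne_of_mem_sdiff_neighborSet (v := fD i) hnadj
    (hDr ▸ Set.mem_range_self i)
  have hC := fun k => (hCr ▸ Set.mem_range_self k : fC k ∈ G.commonNeighbors a b \ {c₁, c₂})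
  have hC' := fun k => adj_and_ne_of_mem_commonNeighbors (hC k).1
  have hCc : ∀ k, ¬ (fC k = c₁ ∨ fC k = c₂) := fun k => (hC k).2
  have hK := fun j => adj_and_ne_of_mem_sdiff_neighborSet (v := fK j) hnadj'
    (hKr ▸ Set.mem_range_self j)
  have hDc : ∀ i, (fD i ≠ c₁ ∧ c₁ ≠ fD i) ∧ fD i ≠ c₂ ∧ c₂ ≠ fD i := fun i =>
    have h₁ : fD i ≠ c₁ := fun h => (hD i).1.2.2.1 (h ▸ hc₁.2)
    have h₂ : fD i ≠ c₂ := fun h => (hD i).1.2.2.1 (h ▸ hc₂.2)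
    ⟨⟨h₁, h₁.symm⟩, h₂, h₂.symm⟩
  have hKc : ∀ j, fK j ≠ c₁ ∧ fK j ≠ c₂ := fun j =>
    ⟨fun h => (hK j).1.2.2.1 (h ▸ hc₁.1), fun h => (hK j).1.2.2.1 (h ▸ hc₂.1)⟩
  refine Or.inr ⟨_, _, _, hD2, by omega, hT'2 ▸ Set.ncard_le_ncard hT',
    ⟨(Iso.symm ⟨Equiv.ofBijective _ (bijective_F'Vert_elim hab hnadj hcover hc hc₁ hc₂ hDinj hDr
      hCinj hCr hKinj hKr), fun {p q} => ?_⟩)⟩⟩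
  rcases p with (c | (i | k)) | (_ | (j | _)) <;> rcases q with (c' | (i' | k')) | (_ | (j' | _))
  all_goals try fin_cases c
  all_goals try fin_cases c'
  all_goals simp [F'Graph, fromRel_adj, hadj, IsHEdge, hD, hC', hCc, hK,
    adj_and_ne_of_mem_commonNeighbors hc₁, adj_and_ne_of_mem_commonNeighbors hc₂, hDc, hKc,
    hnadj, hnadj', hc, hc.symm, hab.symm, hDinj.eq_iff, hCinj.eq_iff, hKinj.eq_iff, hKT]

end SimpleGraph

section Configuration
variable {V : Type*} {G : SimpleGraph V} {x v₁ v₂ v₃ r₁ r₂ : V} {C₁ C₂ : Set V}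

structure CutConfig (G : SimpleGraph V) (x v₁ v₂ v₃ r₁ r₂ : V) (C₁ C₂ : Set V) : Prop where
  comp : IsTwoComponents G x C₁ C₂
  crit : ∀ u v, G.Adj u v → ¬ WinsWithin2 (G.deleteEdges {s(u, v)})
  univ₁ : UnivIn G C₁ v₁
  not_adj₁ : ¬ G.Adj v₁ x
  exists_adj : ∃ c ∈ C₁, G.Adj x c
  univ₂ : UnivIn G C₂ v₂
  univ₃ : UnivIn G C₂ v₃
  adj₂ : G.Adj v₂ x
  adj₃ : G.Adj v₃ x
  ne₂₃ : v₂ ≠ v₃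
  partner₁ : r₁ ∈ xPartners G x v₁ C₁
  partner₂ : r₂ ∈ xPartners G x v₁ C₁
  ne_partner : r₁ ≠ r₂

namespace CutConfig

theorem adj_of_mem_right (hS : CutConfig G x v₁ v₂ v₃ r₁ r₂ C₁ C₂) {z : V} (hz : z ∈ C₂) :
    G.Adj x z :=
  hS.comp.adj_of_dominating_of_mem_right hS.partner₁.1 hS.partner₁.2.2 hz

theorem ne_of_adj_x (hS : CutConfig G x v₁ v₂ v₃ r₁ r₂ C₁ C₂) {u : V} (hu : G.Adj x u) : u ≠ v₁ :=
  fun h => hS.not_adj₁ (h ▸ hu.symm)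

theorem dominating_v₁_x (hS : CutConfig G x v₁ v₂ v₃ r₁ r₂ C₁ C₂) : Dominating G {v₁, x} := by
  refine dominating_pair_iff.2 fun v hv₁ hvx => ?_
  rcases hS.comp.eq_or_mem v with rfl | hv | hv
  exacts [absurd rfl hvx, Or.inl (hS.univ₁.2 v hv hv₁), Or.inr (hS.adj_of_mem_right hv)]

theorem notMem_of_mem_left (hS : CutConfig G x v₁ v₂ v₃ r₁ r₂ C₁ C₂) {a : V} (ha : a ∈ C₁)
    (hav : a ≠ v₁) : a ∉ ({v₁, x, v₂, v₃} : Set V) := by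
  simp [hav, hS.comp.ne_of_mem_left ha, hS.comp.ne_of_mem_of_mem ha hS.univ₂.1,
    hS.comp.ne_of_mem_of_mem ha hS.univ₃.1]

theorem winsWithin2_of_dominating_pairs (hS : CutConfig G x v₁ v₂ v₃ r₁ r₂ C₁ C₂)
    {G' : SimpleGraph V} {q₁ q₂ : V} (hq : q₁ ≠ q₂) (hq₁ : q₁ ∈ xPartners G x v₁ C₁)
    (hq₂ : q₂ ∈ xPartners G x v₁ C₁)
    (hd₂ : Dominating G' {v₁, v₂}) (hd₃ : Dominating G' {v₁, v₃}) (hdx : Dominating G' {v₁, x})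
    (hdq₁ : Dominating G' {x, q₁}) (hdq₂ : Dominating G' {x, q₂}) : WinsWithin2 G' := by
  have hv₁ := hS.univ₁.1
  refine winsWithin2_of_hub (hS.comp.ne_of_mem_left hv₁) hS.ne₂₃ hq
    (fun w hw => ?_) (fun q hq' => ?_) hdx
  · obtain ⟨hwC, hdw⟩ : w ∈ C₂ ∧ Dominating G' {v₁, w} := by
      rcases hw with rfl | rfl
      exacts [⟨hS.univ₂.1, hd₂⟩, ⟨hS.univ₃.1, hd₃⟩]
    exact ⟨hS.comp.ne_of_mem_of_mem hv₁ hwC, (hS.comp.ne_of_mem_right hwC).symm, hdw⟩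
  · obtain ⟨hqP, hdq⟩ : q ∈ xPartners G x v₁ C₁ ∧ Dominating G' {x, q} := by
      rcases hq' with rfl | rfl
      exacts [⟨hq₁, hdq₁⟩, ⟨hq₂, hdq₂⟩]
    exact ⟨hqP.2.1.symm, (hS.comp.ne_of_mem_left hqP.1).symm, hdq⟩

theorem not_adj_of_dominating_deleteEdges (hS : CutConfig G x v₁ v₂ v₃ r₁ r₂ C₁ C₂)
    {a b q₁ q₂ : V} (ha : a ∉ ({v₁, x, v₂, v₃} : Set V)) (hb : b ∉ ({v₁, x, v₂, v₃} : Set V))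
    (hq : q₁ ≠ q₂) (hq₁ : q₁ ∈ xPartners G x v₁ C₁) (hq₂ : q₂ ∈ xPartners G x v₁ C₁)
    (hdq₁ : Dominating (G.deleteEdges {s(a, b)}) {x, q₁})
    (hdq₂ : Dominating (G.deleteEdges {s(a, b)}) {x, q₂}) : ¬ G.Adj a b := by
  simp only [Set.mem_insert_iff, Set.mem_singleton_iff, not_or] at ha hb
  refine fun hab => hS.crit a b hab
    (hS.winsWithin2_of_dominating_pairs hq hq₁ hq₂ ?_ ?_ ?_ hdq₁ hdq₂)
  · exact (hS.comp.dominating_pair_of_univIn hS.univ₁ hS.univ₂ hS.adj₂).deleteEdges_of_notMem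
      (by simp [ha.1, ha.2.2.1]) (by simp [hb.1, hb.2.2.1])
  · exact (hS.comp.dominating_pair_of_univIn hS.univ₁ hS.univ₃ hS.adj₃).deleteEdges_of_notMem
      (by simp [ha.1, ha.2.2.2]) (by simp [hb.1, hb.2.2.2])
  · exact hS.dominating_v₁_x.deleteEdges_of_notMem (by simp [ha.1, ha.2.1])
      (by simp [hb.1, hb.2.1])

theorem eq_or_eq_of_adj (hS : CutConfig G x v₁ v₂ v₃ r₁ r₂ C₁ C₂) {a b q₁ q₂ : V}
    (ha : a ∉ ({v₁, x, v₂, v₃} : Set V)) (hb : b ∉ ({v₁, x, v₂, v₃} : Set V)) (hab : G.Adj a b)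
    (hq : q₁ ≠ q₂) (hq₁ : q₁ ∈ xPartners G x v₁ C₁) (hq₂ : q₂ ∈ xPartners G x v₁ C₁) :
    a = q₁ ∨ a = q₂ ∨ b = q₁ ∨ b = q₂ := by
  by_contra! hne
  have hax : a ≠ x := fun h => ha (by simp [h])
  have hbx : b ≠ x := fun h => hb (by simp [h])
  exact hS.not_adj_of_dominating_deleteEdges ha hb hq hq₁ hq₂
    (hq₁.2.2.deleteEdges_of_notMem (by simp [hax, hne.1]) (by simp [hbx, hne.2.2.1]))
    (hq₂.2.2.deleteEdges_of_notMem (by simp [hax, hne.2.1]) (by simp [hbx, hne.2.2.2])) hab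

theorem not_adj_of_adj_x (hS : CutConfig G x v₁ v₂ v₃ r₁ r₂ C₁ C₂) {a b : V} (ha : a ∈ C₁)
    (hb : b ∈ C₁) (hxa : G.Adj x a) (hxb : G.Adj x b) : ¬ G.Adj a b := by
  have hax := hS.comp.ne_of_mem_left ha
  have hbx := hS.comp.ne_of_mem_left hb
  exact hS.not_adj_of_dominating_deleteEdges (hS.notMem_of_mem_left ha (hS.ne_of_adj_x hxa))
    (hS.notMem_of_mem_left hb (hS.ne_of_adj_x hxb)) hS.ne_partner hS.partner₁ hS.partner₂
    (hS.partner₁.2.2.deleteEdges_pair hax hbx (fun _ => hxb) fun _ => hxa)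
    (hS.partner₂.2.2.deleteEdges_pair hax hbx (fun _ => hxb) fun _ => hxa)

theorem mem_xPartners (hS : CutConfig G x v₁ v₂ v₃ r₁ r₂ C₁ C₂) {u : V} (hu : u = r₁ ∨ u = r₂) :
    u ∈ xPartners G x v₁ C₁ := by
  rcases hu with rfl | rfl
  exacts [hS.partner₁, hS.partner₂]

theorem exists_xPartner_ne (hS : CutConfig G x v₁ v₂ v₃ r₁ r₂ C₁ C₂) (r : V) :
    ∃ r' ∈ xPartners G x v₁ C₁, r' ≠ r := by
  obtain ⟨r', hr', hr'r⟩ := exists_ne_of_ne hS.ne_partner r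
  exact ⟨r', hS.mem_xPartners hr', hr'r⟩

theorem not_adj_xPartner_of_adj_x_of_notMem (hS : CutConfig G x v₁ v₂ v₃ r₁ r₂ C₁ C₂) {r w : V}
    (hr : r ∈ xPartners G x v₁ C₁) (hw : w ∈ C₁) (hxw : G.Adj x w)
    (hwr : w ∉ xPartners G x v₁ C₁) : ¬ G.Adj r w := by
  obtain ⟨r', hr', hr'r⟩ := hS.exists_xPartner_ne r
  have hrx := hS.comp.ne_of_mem_left hr.1
  have hwx := hS.comp.ne_of_mem_left hw
  exact hS.not_adj_of_dominating_deleteEdges (hS.notMem_of_mem_left hr.1 hr.2.1)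
    (hS.notMem_of_mem_left hw (hS.ne_of_adj_x hxw)) hr'r.symm hr hr'
    (hr.2.2.deleteEdges_pair hrx hwx (fun _ => hxw) fun h => absurd (h ▸ hr) hwr)
    (hr'.2.2.deleteEdges_pair hrx hwx (fun h => absurd h hr'r) fun h => absurd (h ▸ hr') hwr)

theorem not_adj_xPartners_of_adj_x (hS : CutConfig G x v₁ v₂ v₃ r₁ r₂ C₁ C₂) {r r' : V}
    (hr : r ∈ xPartners G x v₁ C₁) (hr' : r' ∈ xPartners G x v₁ C₁) (hne : r ≠ r')
    (hxr : G.Adj x r) : ¬ G.Adj r r' := by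
  intro hrr'
  have hrx := hS.comp.ne_of_mem_left hr.1
  have hr'x := hS.comp.ne_of_mem_left hr'.1
  have hv₁x := hS.comp.ne_of_mem_left hS.univ₁.1
  refine hS.crit x r hxr (hS.winsWithin2_of_dominating_pairs hne hr hr' ?_ ?_ ?_ ?_ ?_)
  · exact (hS.comp.dominating_pair_of_univIn hS.univ₁ hS.univ₂ hS.adj₂).deleteEdges_of_notMem
      (by simp [hv₁x.symm, (hS.comp.ne_of_mem_right hS.univ₂.1).symm])
      (by simp [hr.2.1, hS.comp.ne_of_mem_of_mem hr.1 hS.univ₂.1])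
  · exact (hS.comp.dominating_pair_of_univIn hS.univ₁ hS.univ₃ hS.adj₃).deleteEdges_of_notMem
      (by simp [hv₁x.symm, (hS.comp.ne_of_mem_right hS.univ₃.1).symm])
      (by simp [hr.2.1, hS.comp.ne_of_mem_of_mem hr.1 hS.univ₃.1])
  -- in `G - xr` the vertex `r` is still dominated by `v₁` and by `r'`
  · refine hS.dominating_v₁_x.deleteEdges_edge (fun _ _ => ⟨v₁, by simp, hv₁x, ?_⟩)
      fun h => absurd h (by simp [hr.2.1, hrx])
    exact hS.univ₁.2 r hr.1 hr.2.1
  · exact hr.2.2.deleteEdges_edge (fun _ h => absurd (by simp) h) fun _ h => absurd (by simp) h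
  · refine hr'.2.2.deleteEdges_edge (fun _ _ => ⟨r', by simp, hr'x, hrr'.symm⟩)
      fun h => absurd h (by simp [hne, hrx])

theorem adj_x_of_mem_xPartners (hS : CutConfig G x v₁ v₂ v₃ r₁ r₂ C₁ C₂) {r₀ r : V}
    (hr₀ : r₀ ∈ xPartners G x v₁ C₁) (hxr₀ : G.Adj x r₀) (hr : r ∈ xPartners G x v₁ C₁) :
    G.Adj x r := by
  by_contra hxr
  have hrr₀ : r ≠ r₀ := fun h => hxr (h ▸ hxr₀)
  exact hS.not_adj_xPartners_of_adj_x hr₀ hr hrr₀.symm hxr₀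
    (hr₀.2.2.adj_of_not_adj (hS.comp.ne_of_mem_left hr.1) hrr₀ hxr)

theorem exists_ne_of_not_adj_x (hS : CutConfig G x v₁ v₂ v₃ r₁ r₂ C₁ C₂) {d : V} (hd : d ∈ C₁)
    (hdv : d ≠ v₁) (hxd : ¬ G.Adj x d) (hdP : d ∉ xPartners G x v₁ C₁) :
    ∃ d' ∈ C₁, d' ≠ v₁ ∧ ¬ G.Adj x d' ∧ d' ∉ xPartners G x v₁ C₁ ∧ d' ≠ d := by
  by_contra! hno
  refine hdP ⟨hd, hdv, dominating_pair_iff.2 fun v hvx hvd => ?_⟩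
  rcases hS.comp.eq_or_mem v with rfl | hv | hv
  · exact absurd rfl hvx
  · by_cases hvv : v = v₁
    · exact Or.inr (hvv ▸ hS.univ₁.2 d hd hdv).symm
    by_cases hxv : G.Adj x v
    · exact Or.inl hxv
    by_cases hvP : v ∈ xPartners G x v₁ C₁
    · exact Or.inr (hvP.2.2.adj_of_not_adj (hS.comp.ne_of_mem_left hd) (Ne.symm hvd) hxd).symm
    · exact absurd (hno v hv hvv hxv hvP) hvd
  · exact Or.inl (hS.adj_of_mem_right hv)

theorem mem_diff_neighborSet_iff (hS : CutConfig G x v₁ v₂ v₃ r₁ r₂ C₁ C₂) {u : V} :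
    u ∈ G.neighborSet v₁ \ G.neighborSet x ↔ u ∈ C₁ ∧ u ≠ v₁ ∧ ¬ G.Adj x u := by
  refine ⟨fun ⟨hv₁u, hxu⟩ => ⟨?_, (G.ne_of_adj hv₁u).symm, hxu⟩,
    fun ⟨hu, huv, hxu⟩ => ⟨hS.univ₁.2 u hu huv, hxu⟩⟩
  rcases hS.comp.eq_or_mem u with rfl | hu | hu
  exacts [absurd hv₁u hS.not_adj₁, hu, absurd hv₁u (hS.comp.not_adj hS.univ₁.1 hu)]

theorem diff_neighborSet_eq_right (hS : CutConfig G x v₁ v₂ v₃ r₁ r₂ C₁ C₂) :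
    G.neighborSet x \ G.neighborSet v₁ = C₂ := by
  ext u
  refine ⟨fun ⟨hxu, hv₁u⟩ => ?_, fun hu => ⟨hS.adj_of_mem_right hu, hS.comp.not_adj hS.univ₁.1 hu⟩⟩
  rcases hS.comp.eq_or_mem u with rfl | hu | hu
  exacts [absurd hxu (G.irrefl), absurd (hS.univ₁.2 u hu (hS.ne_of_adj_x hxu)) hv₁u, hu]

theorem mem_commonNeighbors_iff (hS : CutConfig G x v₁ v₂ v₃ r₁ r₂ C₁ C₂) {u : V} :
    u ∈ G.commonNeighbors v₁ x ↔ u ∈ C₁ ∧ G.Adj x u := by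
  refine ⟨fun ⟨hv₁u, hxu⟩ => ⟨?_, hxu⟩,
    fun ⟨hu, hxu⟩ => ⟨hS.univ₁.2 u hu (hS.ne_of_adj_x hxu), hxu⟩⟩
  rcases hS.comp.eq_or_mem u with rfl | hu | hu
  exacts [absurd hv₁u hS.not_adj₁, hu, absurd hv₁u (hS.comp.not_adj hS.univ₁.1 hu)]

theorem adj_or_adj (hS : CutConfig G x v₁ v₂ v₃ r₁ r₂ C₁ C₂) (v : V) (hv₁ : v ≠ v₁) (hvx : v ≠ x) :
    G.Adj v₁ v ∨ G.Adj x v :=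
  dominating_pair_iff.1 hS.dominating_v₁_x v hv₁ hvx

theorem adj_iff_of_mem_right (hS : CutConfig G x v₁ v₂ v₃ r₁ r₂ C₁ C₂) {u w : V} (hu : u ∈ C₂)
    (hw : w ∈ C₂) : G.Adj u w ↔ u ≠ w ∧ (u ∈ ({v₂, v₃} : Set V) ∨ w ∈ ({v₂, v₃} : Set V)) := by
  refine ⟨fun huw => ⟨huw.ne, ?_⟩, fun ⟨hne, h⟩ => ?_⟩
  · by_contra! h
    have hnot : ∀ v ∈ C₂, v ∉ ({v₂, v₃} : Set V) → v ∉ ({v₁, x, v₂, v₃} : Set V) := by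
      intro v hv hv'
      simp only [Set.mem_insert_iff, Set.mem_singleton_iff, not_or] at hv' ⊢
      exact ⟨(hS.comp.ne_of_mem_of_mem hS.univ₁.1 hv).symm, hS.comp.ne_of_mem_right hv, hv'⟩
    have hP : ∀ v ∈ C₂, v ≠ r₁ ∧ v ≠ r₂ := fun v hv =>
      ⟨(hS.comp.ne_of_mem_of_mem hS.partner₁.1 hv).symm,
        (hS.comp.ne_of_mem_of_mem hS.partner₂.1 hv).symm⟩
    rcases hS.eq_or_eq_of_adj (hnot u hu h.1) (hnot w hw h.2) huw hS.ne_partner hS.partner₁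
      hS.partner₂ with h | h | h | h
    exacts [(hP u hu).1 h, (hP u hu).2 h, (hP w hw).1 h, (hP w hw).2 h]
  · simp only [Set.mem_insert_iff, Set.mem_singleton_iff] at h
    rcases h with (rfl | rfl) | (rfl | rfl)
    exacts [hS.univ₂.2 w hw hne.symm, hS.univ₃.2 w hw hne.symm, (hS.univ₂.2 u hu hne).symm,
      (hS.univ₃.2 u hu hne).symm]

theorem adj_iff_of_adj_iff_left (hS : CutConfig G x v₁ v₂ v₃ r₁ r₂ C₁ C₂) {Φ : V → V → Prop}
    (hΦ : ∀ u w, Φ u w → u ∈ C₁ ∧ w ∈ C₁)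
    (hleft : ∀ u ∈ C₁, ∀ w ∈ C₁, u ≠ v₁ → w ≠ v₁ → (G.Adj u w ↔ u ≠ w ∧ Φ u w))
    (u w : V) (hu₁ : u ≠ v₁) (hux : u ≠ x) (hw₁ : w ≠ v₁) (hwx : w ≠ x) :
    G.Adj u w ↔ u ≠ w ∧
      (Φ u w ∨ IsHEdge (G.neighborSet x \ G.neighborSet v₁) {v₂, v₃} u w) := by
  rw [hS.diff_neighborSet_eq_right]
  have h₁₂ : ∀ {v}, v ∈ C₁ → v ∉ C₂ := fun hv hv' => hS.comp.ne_of_mem_of_mem hv hv' rfl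
  rcases hS.comp.eq_or_mem u with rfl | hu | hu
  · exact absurd rfl hux
  all_goals rcases hS.comp.eq_or_mem w with rfl | hw | hw
  all_goals try exact absurd rfl hwx
  · rw [hleft u hu w hw hu₁ hw₁]
    simp [IsHEdge, h₁₂ hu]
  · exact iff_of_false (hS.comp.not_adj hu hw) fun ⟨_, h⟩ =>
      h.elim (fun h => h₁₂ (hΦ u w h).2 hw) fun h => h₁₂ hu h.1
  · exact iff_of_false (fun h => hS.comp.not_adj hw hu h.symm) fun ⟨_, h⟩ =>
      h.elim (fun h => h₁₂ (hΦ u w h).1 hu) fun h => h₁₂ hw h.2.1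
  · rw [hS.adj_iff_of_mem_right hu hw]
    have hΦuw : ¬ Φ u w := fun h => h₁₂ (hΦ u w h).1 hu
    simp [IsHEdge, hu, hw, hΦuw]

theorem not_adj_x_of_adj (hS : CutConfig G x v₁ v₂ v₃ r₁ r₂ C₁ C₂)
    (hF : (∀ r ∈ xPartners G x v₁ C₁, ¬ G.Adj x r) ∨ G.neighborSet v₁ \ G.neighborSet x = ∅)
    {u w : V} (hu : u ∈ C₁) (hw : w ∈ C₁) (hwv : w ≠ v₁) (huw : G.Adj u w) : ¬ G.Adj x u := by
  intro hxu
  by_cases hxw : G.Adj x w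
  · exact hS.not_adj_of_adj_x hu hw hxu hxw huw
  have hR := hF.resolve_right (Set.nonempty_iff_ne_empty.1
    ⟨w, hS.mem_diff_neighborSet_iff.2 ⟨hw, hwv, hxw⟩⟩)
  have huR : u ∉ xPartners G x v₁ C₁ := fun h => hR u h hxu
  rcases hS.eq_or_eq_of_adj (hS.notMem_of_mem_left hu (hS.ne_of_adj_x hxu))
    (hS.notMem_of_mem_left hw hwv) huw hS.ne_partner hS.partner₁ hS.partner₂ with h | h | h | h
  · exact huR (h ▸ hS.partner₁)
  · exact huR (h ▸ hS.partner₂)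
  · exact hS.not_adj_xPartner_of_adj_x_of_notMem (h ▸ hS.partner₁) hu hxu huR huw.symm
  · exact hS.not_adj_xPartner_of_adj_x_of_notMem (h ▸ hS.partner₂) hu hxu huR huw.symm

theorem adj_iff_isHEdge (hS : CutConfig G x v₁ v₂ v₃ r₁ r₂ C₁ C₂)
    (hF : (∀ r ∈ xPartners G x v₁ C₁, ¬ G.Adj x r) ∨ G.neighborSet v₁ \ G.neighborSet x = ∅) :
    ∀ u ∈ C₁, ∀ w ∈ C₁, u ≠ v₁ → w ≠ v₁ →
      (G.Adj u w ↔ u ≠ w ∧ IsHEdge (G.neighborSet v₁ \ G.neighborSet x) {r₁, r₂} u w) := by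
  intro u hu w hw huv hwv
  rw [IsHEdge, hS.mem_diff_neighborSet_iff, hS.mem_diff_neighborSet_iff]
  constructor
  · intro huw
    refine ⟨huw.ne, ⟨hu, huv, hS.not_adj_x_of_adj hF hu hw hwv huw⟩,
      ⟨hw, hwv, hS.not_adj_x_of_adj hF hw hu huv huw.symm⟩, ?_⟩
    rcases hS.eq_or_eq_of_adj (hS.notMem_of_mem_left hu huv) (hS.notMem_of_mem_left hw hwv) huw
      hS.ne_partner hS.partner₁ hS.partner₂ with h | h | h | h <;> simp [h]
  · rintro ⟨hne, ⟨-, -, hxu⟩, ⟨-, -, hxw⟩, hT⟩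
    have hux := hS.comp.ne_of_mem_left hu
    have hwx := hS.comp.ne_of_mem_left hw
    simp only [Set.mem_insert_iff, Set.mem_singleton_iff] at hT
    rcases hT with (rfl | rfl) | (rfl | rfl)
    · exact hS.partner₁.2.2.adj_of_not_adj hwx hne.symm hxw
    · exact hS.partner₂.2.2.adj_of_not_adj hwx hne.symm hxw
    · exact (hS.partner₁.2.2.adj_of_not_adj hux hne hxu).symm
    · exact (hS.partner₂.2.2.adj_of_not_adj hux hne hxu).symm

theorem adj_iff_of_adj_x (hS : CutConfig G x v₁ v₂ v₃ r₁ r₂ C₁ C₂) (hx₁ : G.Adj x r₁)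
    (hx₂ : G.Adj x r₂) :
    ∀ u ∈ C₁, ∀ w ∈ C₁, u ≠ v₁ → w ≠ v₁ → (G.Adj u w ↔ u ≠ w ∧
      ((u ∈ ({r₁, r₂} : Set V) ∧ w ∈ G.neighborSet v₁ \ G.neighborSet x) ∨
        (w ∈ ({r₁, r₂} : Set V) ∧ u ∈ G.neighborSet v₁ \ G.neighborSet x))) := by
  intro u hu w hw huv hwv
  simp only [hS.mem_diff_neighborSet_iff, Set.mem_insert_iff, Set.mem_singleton_iff]
  constructor
  · intro huw
    refine ⟨huw.ne, ?_⟩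
    rcases hS.eq_or_eq_of_adj (hS.notMem_of_mem_left hu huv) (hS.notMem_of_mem_left hw hwv) huw
      hS.ne_partner hS.partner₁ hS.partner₂ with h | h | h | h
    · exact Or.inl ⟨Or.inl h, hw, hwv, fun hxw => hS.not_adj_of_adj_x hu hw (h ▸ hx₁) hxw huw⟩
    · exact Or.inl ⟨Or.inr h, hw, hwv, fun hxw => hS.not_adj_of_adj_x hu hw (h ▸ hx₂) hxw huw⟩
    · exact Or.inr ⟨Or.inl h, hu, huv, fun hxu => hS.not_adj_of_adj_x hu hw hxu (h ▸ hx₁) huw⟩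
    · exact Or.inr ⟨Or.inr h, hu, huv, fun hxu => hS.not_adj_of_adj_x hu hw hxu (h ▸ hx₂) huw⟩
  · rintro ⟨hne, ⟨hR, -, -, hxw⟩ | ⟨hR, -, -, hxu⟩⟩
    · exact (hS.mem_xPartners hR).2.2.adj_of_not_adj (hS.comp.ne_of_mem_left hw) hne.symm hxw
    · exact ((hS.mem_xPartners hR).2.2.adj_of_not_adj (hS.comp.ne_of_mem_left hu) hne hxu).symm

theorem pair_subset_diff_neighborSet (hS : CutConfig G x v₁ v₂ v₃ r₁ r₂ C₁ C₂) :
    ({v₂, v₃} : Set V) ⊆ G.neighborSet x \ G.neighborSet v₁ := by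
  rw [hS.diff_neighborSet_eq_right]
  rintro v (rfl | rfl)
  exacts [hS.univ₂.1, hS.univ₃.1]

theorem inFamilyFF'_of_not_adj_x [Finite V] (hS : CutConfig G x v₁ v₂ v₃ r₁ r₂ C₁ C₂)
    (hF : (∀ r ∈ xPartners G x v₁ C₁, ¬ G.Adj x r) ∨ G.neighborSet v₁ \ G.neighborSet x = ∅) :
    InFamilyFF' G := by
  refine SimpleGraph.inFamilyFF'_of_F_shape (hS.comp.ne_of_mem_left hS.univ₁.1) hS.not_adj₁
    hS.adj_or_adj ?_ hS.pair_subset_diff_neighborSet (Set.ncard_pair hS.ne₂₃) ?_ ?_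
    fun u w hu₁ hux hw₁ hwx => hS.adj_iff_of_adj_iff_left
      (fun u w h => ⟨(hS.mem_diff_neighborSet_iff.1 h.1).1,
        (hS.mem_diff_neighborSet_iff.1 h.2.1).1⟩)
      (hS.adj_iff_isHEdge hF) u w hu₁ hux hw₁ hwx
  · by_cases hP : G.neighborSet v₁ \ G.neighborSet x = ∅
    · exact Or.inl hP
    refine Or.inr ⟨fun v hv => ?_, Set.ncard_pair hS.ne_partner⟩
    have hvR := hS.mem_xPartners hv
    exact hS.mem_diff_neighborSet_iff.2 ⟨hvR.1, hvR.2.1, hF.resolve_right hP v hvR⟩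
  · obtain ⟨c, hc, hxc⟩ := hS.exists_adj
    exact ⟨c, hS.mem_commonNeighbors_iff.2 ⟨hc, hxc⟩⟩
  · refine fun hP => Set.ncard_pair hS.ne_partner ▸ Set.ncard_le_ncard fun v hv => ?_
    have hvR := hS.mem_xPartners hv
    refine hS.mem_commonNeighbors_iff.2 ⟨hvR.1, by_contra fun hxv => ?_⟩
    exact (hP ▸ hS.mem_diff_neighborSet_iff.2 ⟨hvR.1, hvR.2.1, hxv⟩ : v ∈ (∅ : Set V))

theorem inFamilyFF'_of_adj_x [Finite V] (hS : CutConfig G x v₁ v₂ v₃ r₁ r₂ C₁ C₂) {r₀ : V}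
    (hr₀ : r₀ ∈ xPartners G x v₁ C₁) (hxr₀ : G.Adj x r₀)
    (hP : (G.neighborSet v₁ \ G.neighborSet x).Nonempty) : InFamilyFF' G := by
  have hx₁ := hS.adj_x_of_mem_xPartners hr₀ hxr₀ hS.partner₁
  have hx₂ := hS.adj_x_of_mem_xPartners hr₀ hxr₀ hS.partner₂
  obtain ⟨d, hd⟩ := hP
  obtain ⟨hdC, hdv, hxd⟩ := hS.mem_diff_neighborSet_iff.1 hd
  obtain ⟨d', hd'C, hd'v, hxd', -, hd'd⟩ := hS.exists_ne_of_not_adj_x hdC hdv hxd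
    fun h => hxd (hS.adj_x_of_mem_xPartners hr₀ hxr₀ h)
  have hP2 : 2 ≤ (G.neighborSet v₁ \ G.neighborSet x).ncard := by
    refine Set.ncard_pair hd'd ▸ Set.ncard_le_ncard ?_
    rintro v (rfl | rfl)
    exacts [hS.mem_diff_neighborSet_iff.2 ⟨hd'C, hd'v, hxd'⟩, hd]
  have hPC : ∀ {u}, u ∈ G.neighborSet v₁ \ G.neighborSet x → u ∈ C₁ := fun h =>
    (hS.mem_diff_neighborSet_iff.1 h).1
  exact SimpleGraph.inFamilyFF'_of_F'_shape (hS.comp.ne_of_mem_left hS.univ₁.1) hS.not_adj₁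
    hS.adj_or_adj hS.ne_partner (hS.mem_commonNeighbors_iff.2 ⟨hS.partner₁.1, hx₁⟩)
    (hS.mem_commonNeighbors_iff.2 ⟨hS.partner₂.1, hx₂⟩) hP2 hS.pair_subset_diff_neighborSet
    (Set.ncard_pair hS.ne₂₃) fun u w hu₁ hux hw₁ hwx => hS.adj_iff_of_adj_iff_left
      (fun u w h => h.elim (fun h => ⟨(hS.mem_xPartners h.1).1, hPC h.2⟩)
        fun h => ⟨hPC h.2, (hS.mem_xPartners h.1).1⟩)
      (hS.adj_iff_of_adj_x hx₁ hx₂) u w hu₁ hux hw₁ hwx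

theorem inFamilyFF' [Finite V] (hS : CutConfig G x v₁ v₂ v₃ r₁ r₂ C₁ C₂) : InFamilyFF' G := by
  by_cases hF : (∀ r ∈ xPartners G x v₁ C₁, ¬ G.Adj x r) ∨ G.neighborSet v₁ \ G.neighborSet x = ∅
  · exact hS.inFamilyFF'_of_not_adj_x hF
  · obtain ⟨hR, hP⟩ := not_or.1 hF
    obtain ⟨r₀, hr₀, hxr₀⟩ : ∃ r ∈ xPartners G x v₁ C₁, G.Adj x r := by simpa using hR
    exact hS.inFamilyFF'_of_adj_x hr₀ hxr₀ (Set.nonempty_iff_ne_empty.2 hP)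

end CutConfig

end Configuration

theorem stmt12 {V : Type*} [Fintype V] (G : SimpleGraph V) (hconn : G.Connected)
    (hcrit : Critical2 G) (x : V) (C₁ C₂ : Set V)
    (hcomp : IsTwoComponents G x C₁ C₂)
    (v₂ v₃ : V) (hne : v₂ ≠ v₃)
    (hv₂ : UnivIn G C₂ v₂) (hv₃ : UnivIn G C₂ v₃)
    (hadj₂ : G.Adj v₂ x) (hadj₃ : G.Adj v₃ x)
    (hC₁ : ∀ v, UnivIn G C₁ v → ¬ G.Adj v x) :
    InFamilyFF' G := by
  obtain ⟨⟨hwin, -⟩, hcrit⟩ := hcrit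
  obtain ⟨v₁, hv₁⟩ := (hcomp.exists_univIn_of_winsWithin2 hwin).1
  obtain ⟨c, hc, hxc⟩ := hcomp.exists_adj_of_connected hconn
  have huniq : ∀ p, UnivIn G C₁ p → p = v₁ := fun p hp =>
    hcomp.univIn_left_unique hcrit hne hv₂ hv₃ hadj₂ hadj₃ hc hxc hp hv₁ (hC₁ p hp) (hC₁ v₁ hv₁)
  obtain ⟨r₁, r₂, hr, hr₁, hr₂⟩ := hcomp.exists_two_xPartners hwin hv₁.1 (hC₁ v₁ hv₁) huniq
  exact CutConfig.inFamilyFF' ⟨hcomp, hcrit, hv₁, hC₁ v₁ hv₁, ⟨c, hc, hxc⟩, hv₂, hv₃, hadj₂, hadj₃,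
    hne, hr₁, hr₂, hr⟩
end
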